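/- arXiv:2411.05332 — 9 statements merged into one kernel-verified Lean document; each statement's English description precedes it below -/
import Mathlib

section
/- Let n, d ≥ 1, let X be an n×d real matrix with rows x¹, …, xⁿ ∈ ℝ^d, let ρ > 0, and let v ∈ ℝ^d with ‖v‖₂ = 1. Then the infimum over all n×d real matrices E with ‖E‖_{2→∞} ≤ ρ of (1/n)·‖X.mulVec v + E.mulVec v‖₂² equals (1/n)·Σ_{i=1}^n (max(|⟨xⁱ, v⟩| − ρ, 0))², and this infimum is attained. -/
/-!
The objective decouples over rows: `(E *ᵥ v) i = ⟨E i, v⟩`, which by Cauchy–Schwarz lies in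
`[-ρ, ρ]` whenever `‖E i‖ ≤ ρ`, and every value `e` in that interval is reached by the row `e • v`.
So each summand is minimised separately, and `min_{|e| ≤ ρ} |c + e| = max (|c| - ρ) 0` is attained
at `e = -clip c`, where `clip c = max (-ρ) (min c ρ)` is the projection of `c` onto `[-ρ, ρ]`.
-/

open Matrix

lemma abs_sum_mul_le_sqrt_mul_sqrt {ι : Type*} (s : Finset ι) (f g : ι → ℝ) :
    |∑ i ∈ s, f i * g i| ≤ √(∑ i ∈ s, f i ^ 2) * √(∑ i ∈ s, g i ^ 2) := by
  refine abs_le.mpr ⟨?_, Real.sum_mul_le_sqrt_mul_sqrt s f g⟩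
  have := Real.sum_mul_le_sqrt_mul_sqrt s (-f) g
  simp only [Pi.neg_apply, neg_mul, Finset.sum_neg_distrib, neg_sq] at this
  linarith

lemma max_abs_sub_le_abs_add {ρ e : ℝ} (c : ℝ) (he : |e| ≤ ρ) : max (|c| - ρ) 0 ≤ |c + e| := by
  refine max_le ?_ (abs_nonneg _)
  have := abs_sub_abs_le_abs_sub c (-e)
  rw [abs_neg, sub_neg_eq_add] at this
  linarith

lemma abs_max_neg_min_le {ρ : ℝ} (hρ : 0 ≤ ρ) (c : ℝ) : |max (-ρ) (min c ρ)| ≤ ρ :=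
  abs_le.mpr ⟨le_max_left _ _, max_le (by linarith) (min_le_right _ _)⟩

lemma abs_sub_max_neg_min {ρ : ℝ} (hρ : 0 ≤ ρ) (c : ℝ) :
    |c - max (-ρ) (min c ρ)| = max (|c| - ρ) 0 := by
  rcases le_total c (-ρ) with h | h
  · rw [max_eq_left ((min_le_left _ _).trans h), abs_of_nonpos (by linarith),
      abs_of_nonpos (by linarith), max_eq_left (by linarith)]; ring
  rcases le_total c ρ with h' | h'
  · rw [min_eq_left h', max_eq_right h, sub_self, abs_zero, max_eq_right]
    exact sub_nonpos.mpr (abs_le.mpr ⟨h, h'⟩)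
  · rw [min_eq_right h', max_eq_right (by linarith), abs_of_nonneg (by linarith),
      abs_of_nonneg (by linarith), max_eq_left (by linarith)]

lemma vecMulVec_mulVec_of_sum_sq_eq_one {m n : Type*} [Fintype n] (u : m → ℝ) {v : n → ℝ}
    (hv : ∑ j, v j ^ 2 = 1) : vecMulVec u v *ᵥ v = u := by
  ext i
  simp [mulVec, dotProduct, vecMulVec, mul_assoc, ← Finset.mul_sum, ← sq, hv]

lemma sqrt_sum_sq_vecMulVec {m n : Type*} [Fintype n] (u : m → ℝ) {v : n → ℝ}
    (hv : √(∑ j, v j ^ 2) = 1) (i : m) : √(∑ j, vecMulVec u v i j ^ 2) = |u i| := by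
  simp only [vecMulVec_apply, mul_pow, ← Finset.mul_sum, Real.sqrt_mul (sq_nonneg _), hv,
    Real.sqrt_sq_eq_abs, mul_one]

lemma abs_mulVec_apply_le {m n : Type*} [Fintype n] (E : Matrix m n ℝ) (v : n → ℝ) (i : m) :
    |(E *ᵥ v) i| ≤ √(∑ j, E i j ^ 2) * √(∑ j, v j ^ 2) :=
  abs_sum_mul_le_sqrt_mul_sqrt _ _ _

theorem stmt2_general (n d : ℕ)
    (X : Matrix (Fin n) (Fin d) ℝ) (ρ : ℝ) (hρ : 0 < ρ) (v : Fin d → ℝ)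
    (hv : Real.sqrt (∑ j, v j ^ 2) = 1) :
    IsLeast {r : ℝ | ∃ E : Matrix (Fin n) (Fin d) ℝ,
        (⨆ i : Fin n, Real.sqrt (∑ j, E i j ^ 2)) ≤ ρ ∧
        r = (1 / n) * ∑ i, ((X.mulVec v + E.mulVec v) i) ^ 2}
      ((1 / n) * ∑ i, max (|∑ j, X i j * v j| - ρ) 0 ^ 2) := by
  change IsLeast _ ((1 / n) * ∑ i, max (|(X *ᵥ v) i| - ρ) 0 ^ 2)
  refine ⟨⟨vecMulVec (fun i => -max (-ρ) (min ((X *ᵥ v) i) ρ)) v, ?_, ?_⟩, ?_⟩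
  · refine Real.iSup_le (fun i => ?_) hρ.le
    rw [sqrt_sum_sq_vecMulVec _ hv, abs_neg]
    exact abs_max_neg_min_le hρ.le _
  · rw [vecMulVec_mulVec_of_sum_sq_eq_one _ (Real.sqrt_eq_one.mp hv)]
    simp only [Pi.add_apply, ← sub_eq_add_neg, ← abs_sub_max_neg_min hρ.le, sq_abs]
  · rintro r ⟨E, hE, rfl⟩
    refine mul_le_mul_of_nonneg_left (Finset.sum_le_sum fun i _ => ?_) (by positivity)
    have hEv : |(E *ᵥ v) i| ≤ ρ := (abs_mulVec_apply_le E v i).trans <| by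
      rw [hv, mul_one]; exact (le_ciSup (Set.finite_range _).bddAbove i).trans hE
    rw [← sq_abs ((X *ᵥ v + E *ᵥ v) i), Pi.add_apply]
    exact pow_le_pow_left₀ (le_max_right _ _) (max_abs_sub_le_abs_add _ hEv) 2

theorem stmt2 (n d : ℕ) (hn : 1 ≤ n) (hd : 1 ≤ d)
    (X : Matrix (Fin n) (Fin d) ℝ) (ρ : ℝ) (hρ : 0 < ρ) (v : Fin d → ℝ)
    (hv : Real.sqrt (∑ j, v j ^ 2) = 1) :
    IsLeast {r : ℝ | ∃ E : Matrix (Fin n) (Fin d) ℝ,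
        (⨆ i : Fin n, Real.sqrt (∑ j, E i j ^ 2)) ≤ ρ ∧
        r = (1 / n) * ∑ i, ((X.mulVec v + E.mulVec v) i) ^ 2}
      ((1 / n) * ∑ i, max (|∑ j, X i j * v j| - ρ) 0 ^ 2) :=
  stmt2_general n d X ρ hρ v hv
end

section
/- Let n, d ≥ 1, let v ∈ ℝ^d and ρ ≥ 0. Then { E.mulVec v : E an n×d real matrix with ‖E‖_{1→2} ≤ ρ } = { u ∈ ℝⁿ : ‖u‖₂ ≤ ρ·‖v‖₁ }, where ‖v‖₁ = Σ_i |v_i|. -/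
/-!
By the triangle inequality over the columns, `‖E v‖₂ ≤ ∑ⱼ |vⱼ| ‖E₍:,ⱼ₎‖₂ ≤ ρ ‖v‖₁`. Conversely, if
`‖u‖₂ ≤ ρ ‖v‖₁` with `v ≠ 0`, the rank-one matrix `u (sign v)ᵀ / ‖v‖₁` maps `v` to `u`, and each of
its columns has norm at most `‖u‖₂ / ‖v‖₁ ≤ ρ`; if `v = 0` then `u = 0` and `E = 0` works.
-/

open Matrix

lemma sqrt_sum_sq_eq_norm_toLp {m : Type*} [Fintype m] (u : m → ℝ) :
    √(∑ i, u i ^ 2) = ‖WithLp.toLp 2 u‖ := by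
  simp [EuclideanSpace.norm_eq, sq_abs]

lemma toLp_mulVec_eq_sum {m n : Type*} [Fintype n] (E : Matrix m n ℝ) (v : n → ℝ) :
    WithLp.toLp 2 (E *ᵥ v) = ∑ j, v j • WithLp.toLp 2 (Eᵀ j) := by
  ext i
  simp [mulVec, dotProduct, mul_comm]

lemma norm_toLp_mulVec_le {m n : Type*} [Fintype m] [Fintype n] (E : Matrix m n ℝ) (v : n → ℝ) :
    ‖WithLp.toLp 2 (E *ᵥ v)‖ ≤ ∑ j, |v j| * ‖WithLp.toLp 2 (Eᵀ j)‖ := by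
  rw [toLp_mulVec_eq_sum]
  refine (norm_sum_le _ _).trans_eq ?_
  simp [norm_smul]

lemma norm_toLp_mulVec_le_of_norm_col_le {m n : Type*} [Fintype m] [Fintype n]
    {E : Matrix m n ℝ} {ρ : ℝ} (hE : ∀ j, ‖WithLp.toLp 2 (Eᵀ j)‖ ≤ ρ) (v : n → ℝ) :
    ‖WithLp.toLp 2 (E *ᵥ v)‖ ≤ ρ * ∑ j, |v j| :=
  calc ‖WithLp.toLp 2 (E *ᵥ v)‖ ≤ ∑ j, |v j| * ‖WithLp.toLp 2 (Eᵀ j)‖ := norm_toLp_mulVec_le E v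
    _ ≤ ∑ j, |v j| * ρ := by gcongr with j; exact hE j
    _ = ρ * ∑ j, |v j| := by rw [Finset.mul_sum]; simp only [mul_comm]

lemma transpose_vecMulVec_apply {m n : Type*} (u : m → ℝ) (w : n → ℝ) (j : n) :
    (vecMulVec u w)ᵀ j = w j • u := by
  ext i
  simp [vecMulVec, mul_comm]

lemma abs_sign_le_one {α : Type*} [Ring α] [LinearOrder α] [IsStrictOrderedRing α] (x : α) :
    |(SignType.sign x : α)| ≤ 1 := by
  cases SignType.sign x <;> simp

lemma exists_norm_col_le_mulVec_eq {m n : Type*} [Fintype m] [Fintype n] {u : m → ℝ}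
    {v : n → ℝ} {ρ : ℝ} (hρ : 0 ≤ ρ) (hu : ‖WithLp.toLp 2 u‖ ≤ ρ * ∑ j, |v j|) :
    ∃ E : Matrix m n ℝ, (∀ j, ‖WithLp.toLp 2 (Eᵀ j)‖ ≤ ρ) ∧ E *ᵥ v = u := by
  set S := ∑ j, |v j|
  have hS₀ : 0 ≤ S := Finset.sum_nonneg fun j _ => abs_nonneg (v j)
  rcases hS₀.eq_or_lt with hS | hS
  · rw [← hS, mul_zero, norm_le_zero_iff] at hu
    refine ⟨0, fun j => ?_, ?_⟩
    · show ‖WithLp.toLp 2 (0 : m → ℝ)‖ ≤ ρ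
      simpa using hρ
    · simpa using congrArg WithLp.ofLp hu.symm
  refine ⟨vecMulVec u fun j => SignType.sign (v j) / S, fun j => ?_, ?_⟩
  · rw [transpose_vecMulVec_apply, WithLp.toLp_smul, norm_smul, Real.norm_eq_abs, abs_div,
      abs_of_pos hS, div_mul_eq_mul_div, div_le_iff₀ hS]
    calc |(SignType.sign (v j) : ℝ)| * ‖WithLp.toLp 2 u‖ ≤ 1 * ‖WithLp.toLp 2 u‖ := by
          gcongr; exact abs_sign_le_one _
      _ ≤ ρ * S := by rwa [one_mul]
  · have hdot : (fun j => (SignType.sign (v j) : ℝ) / S) ⬝ᵥ v = 1 := by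
      simp only [dotProduct, div_mul_eq_mul_div, sign_mul_self, ← Finset.sum_div]
      exact div_self hS.ne'
    rw [vecMulVec_mulVec, hdot]
    simp

theorem stmt3_general (n d : ℕ) (v : Fin d → ℝ) (ρ : ℝ) (hρ : 0 ≤ ρ) :
    {u : Fin n → ℝ | ∃ E : Matrix (Fin n) (Fin d) ℝ,
        (⨆ j : Fin d, Real.sqrt (∑ i, E i j ^ 2)) ≤ ρ ∧ u = E.mulVec v} =
      {u : Fin n → ℝ | Real.sqrt (∑ i, u i ^ 2) ≤ ρ * ∑ j, |v j|} := by
  ext u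
  simp only [Set.mem_ofPred_eq, sqrt_sum_sq_eq_norm_toLp]
  constructor
  · rintro ⟨E, hE, rfl⟩
    refine norm_toLp_mulVec_le_of_norm_col_le (fun j => ?_) v
    exact (le_ciSup (f := fun j => ‖WithLp.toLp 2 (Eᵀ j)‖) (Finite.bddAbove_range _) j).trans hE
  · intro hu
    obtain ⟨E, hE, rfl⟩ := exists_norm_col_le_mulVec_eq hρ hu
    exact ⟨E, Real.iSup_le hE hρ, rfl⟩

theorem stmt3 (n d : ℕ) (hn : 1 ≤ n) (hd : 1 ≤ d) (v : Fin d → ℝ) (ρ : ℝ) (hρ : 0 ≤ ρ) :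
    {u : Fin n → ℝ | ∃ E : Matrix (Fin n) (Fin d) ℝ,
        (⨆ j : Fin d, Real.sqrt (∑ i, E i j ^ 2)) ≤ ρ ∧ u = E.mulVec v} =
      {u : Fin n → ℝ | Real.sqrt (∑ i, u i ^ 2) ≤ ρ * ∑ j, |v j|} :=
  stmt3_general n d v ρ hρ
end

section
/- Let n, d ≥ 1, k ≥ 1, ρ > 0, and let N be a positive integer. Let X be an n×d real matrix with rows x¹, …, xⁿ ∈ ℝ^d, let Σ̂ := (1/n) XᵀX, and suppose (v_1, …, v_d) is an orthonormal basis of ℝ^d with Σ̂ = Σ_{j=1}^d λ_j v_j v_jᵀ and λ_1 ≥ ⋯ ≥ λ_d ≥ 0. Define opt := sup { (1/n)·Σ_{i=1}^n (max(|⟨xⁱ, v⟩| − ρ, 0))² : v ∈ ℝ^d, ‖v‖₂ = 1, ‖v‖₀ ≤ k }, and define ub as the supremum of Σ_{j=1}^d λ_j·(Σ_{ℓ=−N}^N (ℓ/N)²·η_j(ℓ)) + (1/n)·Σ_{i=1}^n φ_ρ(⟨xⁱ, v⟩) over all pairs (v, η) such that ‖v‖₂ ≤ 1, ‖v‖₀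 ≤ k, and for each j ∈ {1,…,d} the vector η_j = (η_j(−N),…,η_j(N)) of nonnegative reals is SOS-II with Σ_{ℓ=−N}^N η_j(ℓ) = 1 and ⟨v_j, v⟩ = Σ_{ℓ=−N}^N (ℓ/N)·η_j(ℓ). Then opt ≤ ub ≤ opt + (1/(4N²))·Σ_{j=1}^d λ_j. -/
open Matrix

/-- A vector `η` of `2N+1` nonnegative reals indexed by `ℓ ∈ {-N, …, N}` is SOS-II if
at most two of its entries are nonzero, and if two are nonzero they are consecutive. -/
def IsSOSII (N : ℕ) (η : ℤ → ℝ) : Prop :=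
  (∀ ℓ ∈ Finset.Icc (-(N : ℤ)) (N : ℤ), 0 ≤ η ℓ) ∧
  ∃ ℓ₀ : ℤ, ∀ ℓ ∈ Finset.Icc (-(N : ℤ)) (N : ℤ), η ℓ ≠ 0 → ℓ = ℓ₀ ∨ ℓ = ℓ₀ + 1

/-!
Expanding `(1/n) ‖X w‖² = ∑ⱼ λⱼ ⟨vⱼ, w⟩²` turns the relaxed objective into
`f w + ∑ⱼ λⱼ (Mⱼ - tⱼ²)`, where `f` is the truncated objective and `tⱼ = ⟨vⱼ, w⟩`, `Mⱼ` are the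
mean and second moment of `ηⱼ` on the grid `ℓ / N`. By Jensen `Mⱼ ≥ tⱼ²`; and an SOS-II `ηⱼ` sits
on two grid points `1 / N` apart, so its variance is at most `1 / (4 N²)`. Conversely every
`|t| ≤ 1` is the mean of an SOS-II `η` (interpolate between the two neighbouring grid points), and
rescaling `w` from the unit ball onto the unit sphere can only increase `f`, as the truncation is
monotone in `|⟨xⁱ, w⟩|`.
-/

section Moments

variable {ι : Type*} {s : Finset ι} {η t : ι → ℝ}

theorem sq_sum_mul_le_sum_sq_mul (hη : ∀ i ∈ s, 0 ≤ η i) (h1 : ∑ i ∈ s, η i = 1) :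
    (∑ i ∈ s, t i * η i) ^ 2 ≤ ∑ i ∈ s, t i ^ 2 * η i := by
  simpa only [smul_eq_mul, mul_comm] using
    (even_two.convexOn_pow (𝕜 := ℝ)).map_sum_le hη h1 fun i _ => Set.mem_univ (t i)

/-- The variance of a distribution carried by `α` and `β` is `(m - α) * (β - m)`, `m` the mean. -/
theorem sum_sq_mul_le_sq_sum_mul_add_of_two_point {α β : ℝ} (h1 : ∑ i ∈ s, η i = 1)
    (hsupp : ∀ i ∈ s, η i ≠ 0 → t i = α ∨ t i = β) :
    ∑ i ∈ s, t i ^ 2 * η i ≤ (∑ i ∈ s, t i * η i) ^ 2 + (β - α) ^ 2 / 4 := by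
  have hzero : ∑ i ∈ s, (t i - α) * (t i - β) * η i = 0 := by
    refine Finset.sum_eq_zero fun i hi => ?_
    by_cases hηi : η i = 0
    · simp [hηi]
    · rcases hsupp i hi hηi with h | h <;> simp [h]
  have hexpand : ∑ i ∈ s, (t i - α) * (t i - β) * η i
      = ∑ i ∈ s, t i ^ 2 * η i - (α + β) * ∑ i ∈ s, t i * η i + α * β * ∑ i ∈ s, η i := by
    simp only [Finset.mul_sum, ← Finset.sum_sub_distrib, ← Finset.sum_add_distrib]
    exact Finset.sum_congr rfl fun i _ => by ring
  rw [hzero, h1] at hexpand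
  nlinarith [sq_nonneg (2 * ∑ i ∈ s, t i * η i - α - β)]

end Moments

namespace IsSOSII

variable {N : ℕ} {η : ℤ → ℝ}

theorem sq_mean_le_secondMoment (h : IsSOSII N η)
    (h1 : ∑ ℓ ∈ Finset.Icc (-(N : ℤ)) N, η ℓ = 1) :
    (∑ ℓ ∈ Finset.Icc (-(N : ℤ)) N, ((ℓ : ℝ) / N) * η ℓ) ^ 2
      ≤ ∑ ℓ ∈ Finset.Icc (-(N : ℤ)) N, ((ℓ : ℝ) / N) ^ 2 * η ℓ :=
  sq_sum_mul_le_sum_sq_mul h.1 h1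

theorem secondMoment_le_sq_mean_add (h : IsSOSII N η)
    (h1 : ∑ ℓ ∈ Finset.Icc (-(N : ℤ)) N, η ℓ = 1) :
    ∑ ℓ ∈ Finset.Icc (-(N : ℤ)) N, ((ℓ : ℝ) / N) ^ 2 * η ℓ
      ≤ (∑ ℓ ∈ Finset.Icc (-(N : ℤ)) N, ((ℓ : ℝ) / N) * η ℓ) ^ 2 + 1 / (4 * N ^ 2) := by
  obtain ⟨-, ℓ₀, hℓ₀⟩ := h
  have := sum_sq_mul_le_sq_sum_mul_add_of_two_point (t := fun ℓ : ℤ => (ℓ : ℝ) / N)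
    (α := ℓ₀ / N) (β := (ℓ₀ + 1) / N) h1 fun ℓ hℓ hne => by
      rcases hℓ₀ ℓ hℓ hne with rfl | rfl
      · exact Or.inl rfl
      · exact Or.inr (by push_cast; rfl)
  convert this using 2
  ring

end IsSOSII

theorem isSOSII_single_add_single {N : ℕ} (a : ℤ) {θ : ℝ} (hθ₀ : 0 ≤ θ) (hθ₁ : θ ≤ 1) :
    IsSOSII N (Pi.single a (1 - θ) + Pi.single (a + 1) θ) := by
  refine ⟨fun ℓ _ => ?_, a, fun ℓ _ hne => ?_⟩
  · simp only [Pi.add_apply, Pi.single_apply]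
    split_ifs <;> linarith
  · by_contra! hℓ
    simp [hℓ.1, hℓ.2] at hne

theorem exists_int_le_le_add_one {N : ℕ} (hN : 1 ≤ N) {x : ℝ} (hx : |x| ≤ N) :
    ∃ a : ℤ, -(N : ℤ) ≤ a ∧ a + 1 ≤ N ∧ (a : ℝ) ≤ x ∧ x ≤ a + 1 := by
  obtain ⟨hx₁, hx₂⟩ := abs_le.mp hx
  refine ⟨min ⌊x⌋ (N - 1), le_min (Int.le_floor.mpr (by push_cast; linarith)) (by omega),
    by omega, (Int.cast_le.mpr (min_le_left _ _)).trans (Int.floor_le x), ?_⟩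
  rcases min_choice ⌊x⌋ ((N : ℤ) - 1) with h | h <;> rw [h]
  · exact (Int.lt_floor_add_one x).le
  · push_cast; linarith

theorem exists_isSOSII_mean_eq {N : ℕ} (hN : 1 ≤ N) {t : ℝ} (ht : |t| ≤ 1) :
    ∃ η : ℤ → ℝ, IsSOSII N η ∧ ∑ ℓ ∈ Finset.Icc (-(N : ℤ)) N, η ℓ = 1 ∧
      ∑ ℓ ∈ Finset.Icc (-(N : ℤ)) N, ((ℓ : ℝ) / N) * η ℓ = t := by
  have hN₀ : (N : ℝ) ≠ 0 := by positivity
  obtain ⟨a, ha₁, ha₂, hla, hra⟩ := exists_int_le_le_add_one hN (x := N * t) (by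
    rw [abs_mul, Nat.abs_cast]; exact mul_le_of_le_one_right N.cast_nonneg ht)
  have hmem : a ∈ Finset.Icc (-(N : ℤ)) N := Finset.mem_Icc.mpr ⟨ha₁, by omega⟩
  have hmem' : a + 1 ∈ Finset.Icc (-(N : ℤ)) N := Finset.mem_Icc.mpr ⟨by omega, ha₂⟩
  refine ⟨_, isSOSII_single_add_single a (θ := N * t - a) (by linarith) (by linarith), ?_, ?_⟩
  · simp [Finset.sum_add_distrib, Finset.sum_pi_single', hmem, hmem']
  · simp [Pi.single_apply, mul_add, Finset.sum_add_distrib, hmem, hmem']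
    field_simp
    ring

theorem abs_sum_mul_le_one {ι : Type*} [Fintype ι] {a w : ι → ℝ} (ha : ∑ i, a i ^ 2 = 1)
    (hw : ∑ i, w i ^ 2 ≤ 1) : |∑ i, a i * w i| ≤ 1 := by
  rw [← sq_le_one_iff_abs_le_one]
  calc (∑ i, a i * w i) ^ 2 ≤ (∑ i, a i ^ 2) * ∑ i, w i ^ 2 :=
        Finset.sum_mul_sq_le_sq_mul_sq _ _ _
    _ ≤ 1 := by rw [ha, one_mul]; exact hw

theorem exists_unit_ncard_le {ι : Type*} [Fintype ι] [Nonempty ι] {k : ℕ} (hk : 1 ≤ k) :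
    ∃ w : ι → ℝ, √(∑ i, w i ^ 2) = 1 ∧ {i | w i ≠ 0}.ncard ≤ k := by
  obtain ⟨i₀⟩ := ‹Nonempty ι›
  classical
  refine ⟨Pi.single i₀ 1, ?_, ?_⟩
  · simp [Pi.single_apply]
  · simpa [Pi.single_apply] using hk

/-- Take `w' = w / ‖w‖` if `w ≠ 0`, and any sparse unit vector otherwise. -/
theorem exists_unit_ncard_le_abs_le {ι : Type*} [Fintype ι] [Nonempty ι] {k : ℕ} (hk : 1 ≤ k)
    {w : ι → ℝ} (hw : √(∑ i, w i ^ 2) ≤ 1) (hwk : {i | w i ≠ 0}.ncard ≤ k) :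
    ∃ w' : ι → ℝ, √(∑ i, w' i ^ 2) = 1 ∧ {i | w' i ≠ 0}.ncard ≤ k ∧
      ∀ a : ι → ℝ, |∑ i, a i * w i| ≤ |∑ i, a i * w' i| := by
  by_cases hw₀ : w = 0
  · obtain ⟨w', hw'⟩ := exists_unit_ncard_le (ι := ι) hk
    exact ⟨w', hw'.1, hw'.2, fun a => by simp [hw₀]⟩
  set c := √(∑ i, w i ^ 2)
  have hc : 0 < c := Real.sqrt_pos.mpr <| by
    obtain ⟨i, hi⟩ := Function.ne_iff.mp hw₀
    replace hi : w i ≠ 0 := hi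
    exact Finset.sum_pos' (fun i _ => sq_nonneg _) ⟨i, Finset.mem_univ _, by positivity⟩
  refine ⟨c⁻¹ • w, ?_, by simpa [hc.ne'] using hwk, fun a => ?_⟩
  · simp only [Pi.smul_apply, smul_eq_mul, mul_pow, ← Finset.mul_sum]
    rw [Real.sqrt_mul (by positivity), Real.sqrt_sq (by positivity), inv_mul_cancel₀ hc.ne']
  · simp only [Pi.smul_apply, smul_eq_mul, mul_left_comm _ c⁻¹, ← Finset.mul_sum, abs_mul,
      abs_inv, abs_of_pos hc]
    exact le_mul_of_one_le_left (abs_nonneg _) ((one_le_inv₀ hc).mpr hw)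

theorem max_abs_sub_sq_le_of_abs_le {s t ρ : ℝ} (h : |s| ≤ |t|) :
    max (|s| - ρ) 0 ^ 2 ≤ max (|t| - ρ) 0 ^ 2 := by
  gcongr

theorem max_abs_sub_sq_le_sq {t ρ : ℝ} (hρ : 0 ≤ ρ) : max (|t| - ρ) 0 ^ 2 ≤ t ^ 2 := by
  rw [← sq_abs t]
  gcongr
  exact max_le (by linarith) (abs_nonneg t)

theorem one_div_mul_sum_sq_eq_of_decomp {n d : ℕ} {X : Matrix (Fin n) (Fin d) ℝ}
    {v : Fin d → Fin d → ℝ} {lam : Fin d → ℝ}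
    (hdecomp : (1 / (n : ℝ)) • (Xᵀ * X) = ∑ j, lam j • vecMulVec (v j) (v j))
    (w : Fin d → ℝ) :
    (1 / (n : ℝ)) * ∑ i, (∑ j, X i j * w j) ^ 2 = ∑ j, lam j * (∑ i, v j i * w i) ^ 2 := by
  calc (1 / (n : ℝ)) * ∑ i, (∑ j, X i j * w j) ^ 2
      = w ⬝ᵥ ((1 / (n : ℝ)) • (Xᵀ * X)) *ᵥ w := by
        rw [smul_mulVec, dotProduct_smul, ← mulVec_mulVec, mulVec_transpose, dotProduct_comm,
          ← dotProduct_mulVec]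
        simp only [dotProduct, mulVec, sq, smul_eq_mul]
    _ = ∑ j, lam j * (v j ⬝ᵥ w) ^ 2 := by
        rw [hdecomp, sum_mulVec, dotProduct_sum]
        refine Finset.sum_congr rfl fun j _ => ?_
        rw [smul_mulVec, dotProduct_smul, vecMulVec_mulVec, op_smul_eq_smul, dotProduct_smul,
          dotProduct_comm w, smul_eq_mul, smul_eq_mul, sq]

theorem bddAbove_of_forall_exists_le_add {s t : Set ℝ} {c : ℝ} (ht : BddAbove t)
    (h : ∀ a ∈ s, ∃ b ∈ t, a ≤ b + c) : BddAbove s := by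
  obtain ⟨B, hB⟩ := ht
  refine ⟨B + c, fun a ha => ?_⟩
  obtain ⟨b, hb, hab⟩ := h a ha
  exact hab.trans (add_le_add_left (hB hb) c)

theorem csSup_le_csSup_add_of_forall_exists_le_add {s t : Set ℝ} {c : ℝ} (hs : s.Nonempty)
    (ht : BddAbove t) (h : ∀ a ∈ s, ∃ b ∈ t, a ≤ b + c) : sSup s ≤ sSup t + c :=
  csSup_le hs fun a ha => by
    obtain ⟨b, hb, hab⟩ := h a ha
    exact hab.trans (add_le_add_left (le_csSup ht hb) c)

noncomputable section Relaxation

variable {n d : ℕ} (k N : ℕ) (ρ : ℝ) (X : Matrix (Fin n) (Fin d) ℝ) (v : Fin d → Fin d → ℝ)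
  (lam : Fin d → ℝ)

def truncatedObjective (w : Fin d → ℝ) : ℝ :=
  (1 / n) * ∑ i, max (|∑ j, X i j * w j| - ρ) 0 ^ 2

def relaxedObjective (w : Fin d → ℝ) (η : Fin d → ℤ → ℝ) : ℝ :=
  (∑ j, lam j * ∑ ℓ ∈ Finset.Icc (-(N : ℤ)) (N : ℤ), ((ℓ : ℝ) / N) ^ 2 * η j ℓ)
    + (1 / n) * ∑ i, (max (|∑ j, X i j * w j| - ρ) 0 ^ 2 - (∑ j, X i j * w j) ^ 2)

def truncatedValues : Set ℝ :=
  {r | ∃ w : Fin d → ℝ, √(∑ i, w i ^ 2) = 1 ∧ {i | w i ≠ 0}.ncard ≤ k ∧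
    r = truncatedObjective ρ X w}

def relaxedValues : Set ℝ :=
  {r | ∃ (w : Fin d → ℝ) (η : Fin d → ℤ → ℝ),
    √(∑ i, w i ^ 2) ≤ 1 ∧ {i | w i ≠ 0}.ncard ≤ k ∧
    (∀ j, IsSOSII N (η j)) ∧
    (∀ j, ∑ ℓ ∈ Finset.Icc (-(N : ℤ)) (N : ℤ), η j ℓ = 1) ∧
    (∀ j, (∑ i, v j i * w i) = ∑ ℓ ∈ Finset.Icc (-(N : ℤ)) (N : ℤ), ((ℓ : ℝ) / N) * η j ℓ) ∧
    r = relaxedObjective N ρ X lam w η}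

variable {k N ρ X v lam}

theorem relaxedObjective_eq
    (hdecomp : (1 / (n : ℝ)) • (Xᵀ * X) = ∑ j, lam j • vecMulVec (v j) (v j))
    (w : Fin d → ℝ) (η : Fin d → ℤ → ℝ) :
    relaxedObjective N ρ X lam w η = truncatedObjective ρ X w +
      ∑ j, lam j * (∑ ℓ ∈ Finset.Icc (-(N : ℤ)) (N : ℤ), ((ℓ : ℝ) / N) ^ 2 * η j ℓ
        - (∑ i, v j i * w i) ^ 2) := by
  rw [relaxedObjective, truncatedObjective, Finset.sum_sub_distrib, mul_sub,
    one_div_mul_sum_sq_eq_of_decomp hdecomp]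
  simp only [mul_sub, Finset.sum_sub_distrib]
  ring

theorem truncatedObjective_le_sum (hρ : 0 ≤ ρ) (hv : ∀ j, ∑ i, v j i ^ 2 = 1)
    (hlam : ∀ j, 0 ≤ lam j)
    (hdecomp : (1 / (n : ℝ)) • (Xᵀ * X) = ∑ j, lam j • vecMulVec (v j) (v j))
    {w : Fin d → ℝ} (hw : ∑ i, w i ^ 2 ≤ 1) :
    truncatedObjective ρ X w ≤ ∑ j, lam j := by
  calc truncatedObjective ρ X w ≤ (1 / (n : ℝ)) * ∑ i, (∑ j, X i j * w j) ^ 2 := by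
        unfold truncatedObjective
        gcongr (1 / (n : ℝ)) * ∑ i, ?_ with i
        exact max_abs_sub_sq_le_sq hρ
    _ = ∑ j, lam j * (∑ i, v j i * w i) ^ 2 := one_div_mul_sum_sq_eq_of_decomp hdecomp w
    _ ≤ ∑ j, lam j := by
        gcongr with j
        exact mul_le_of_le_one_right (hlam j)
          ((sq_le_one_iff_abs_le_one _).mpr (abs_sum_mul_le_one (hv j) hw))

theorem truncatedValues_nonempty (hd : 1 ≤ d) (hk : 1 ≤ k) :
    (truncatedValues k ρ X).Nonempty := by
  have : Nonempty (Fin d) := ⟨⟨0, hd⟩⟩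
  obtain ⟨w, hw, hwk⟩ := exists_unit_ncard_le (ι := Fin d) hk
  exact ⟨_, w, hw, hwk, rfl⟩

theorem truncatedValues_bddAbove (hρ : 0 ≤ ρ) (hv : ∀ j, ∑ i, v j i ^ 2 = 1)
    (hlam : ∀ j, 0 ≤ lam j)
    (hdecomp : (1 / (n : ℝ)) • (Xᵀ * X) = ∑ j, lam j • vecMulVec (v j) (v j)) :
    BddAbove (truncatedValues k ρ X) := by
  refine ⟨∑ j, lam j, ?_⟩
  rintro _ ⟨w, hw, -, rfl⟩
  exact truncatedObjective_le_sum hρ hv hlam hdecomp (Real.sqrt_eq_one.mp hw).le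

theorem relaxedValues_nonempty (hN : 1 ≤ N) : (relaxedValues k N ρ X v lam).Nonempty := by
  obtain ⟨η, hη, hη₁, hη₀⟩ := exists_isSOSII_mean_eq hN (t := 0) (by simp)
  exact ⟨_, 0, fun _ => η, by simp, by simp, fun _ => hη, fun _ => hη₁, fun _ => by simp [hη₀],
    rfl⟩

theorem exists_relaxedValues_ge (hN : 1 ≤ N) (hv : ∀ j, ∑ i, v j i ^ 2 = 1)
    (hlam : ∀ j, 0 ≤ lam j)
    (hdecomp : (1 / (n : ℝ)) • (Xᵀ * X) = ∑ j, lam j • vecMulVec (v j) (v j)) :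
    ∀ r ∈ truncatedValues k ρ X, ∃ r' ∈ relaxedValues k N ρ X v lam, r ≤ r' := by
  rintro _ ⟨w, hw, hwk, rfl⟩
  choose η hη hη₁ hη_mean using fun j =>
    exists_isSOSII_mean_eq hN (abs_sum_mul_le_one (hv j) (Real.sqrt_eq_one.mp hw).le)
  refine ⟨_, ⟨w, η, hw.le, hwk, hη, hη₁, fun j => (hη_mean j).symm, rfl⟩, ?_⟩
  rw [relaxedObjective_eq hdecomp, le_add_iff_nonneg_right]
  refine Finset.sum_nonneg fun j _ => mul_nonneg (hlam j) (sub_nonneg.mpr ?_)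
  rw [← hη_mean j]
  exact (hη j).sq_mean_le_secondMoment (hη₁ j)

theorem exists_truncatedValues_add_ge (hd : 1 ≤ d) (hk : 1 ≤ k) (hlam : ∀ j, 0 ≤ lam j)
    (hdecomp : (1 / (n : ℝ)) • (Xᵀ * X) = ∑ j, lam j • vecMulVec (v j) (v j)) :
    ∀ r ∈ relaxedValues k N ρ X v lam, ∃ r' ∈ truncatedValues k ρ X,
      r ≤ r' + 1 / (4 * N ^ 2) * ∑ j, lam j := by
  rintro _ ⟨w, η, hw, hwk, hη, hη₁, hη_mean, rfl⟩
  have : Nonempty (Fin d) := ⟨⟨0, hd⟩⟩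
  obtain ⟨w', hw', hw'k, hdom⟩ := exists_unit_ncard_le_abs_le hk hw hwk
  refine ⟨_, ⟨w', hw', hw'k, rfl⟩, ?_⟩
  rw [relaxedObjective_eq hdecomp, Finset.mul_sum]
  refine add_le_add ?_ (Finset.sum_le_sum fun j _ => ?_)
  · unfold truncatedObjective
    gcongr (1 / (n : ℝ)) * ∑ i, ?_ with i
    exact max_abs_sub_sq_le_of_abs_le (hdom (X i))
  · rw [mul_comm (1 / _), hη_mean j]
    exact mul_le_mul_of_nonneg_left
      (sub_le_iff_le_add'.mpr ((hη j).secondMoment_le_sq_mean_add (hη₁ j))) (hlam j)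

end Relaxation

theorem stmt6_general (n d k N : ℕ) (hd : 1 ≤ d) (hk : 1 ≤ k) (hN : 1 ≤ N)
    (ρ : ℝ) (hρ : 0 < ρ)
    (X : Matrix (Fin n) (Fin d) ℝ) (v : Fin d → Fin d → ℝ) (lam : Fin d → ℝ)
    (horth : ∀ j j' : Fin d, (∑ i, v j i * v j' i) = if j = j' then 1 else 0)
    (hnonneg : ∀ j, 0 ≤ lam j)
    (hdecomp : (1 / (n : ℝ)) • (Xᵀ * X) = ∑ j, lam j • Matrix.vecMulVec (v j) (v j))
    (opt ub : ℝ)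
    (hopt : opt = sSup {r : ℝ | ∃ w : Fin d → ℝ,
        Real.sqrt (∑ i, w i ^ 2) = 1 ∧ {i | w i ≠ 0}.ncard ≤ k ∧
        r = (1 / n) * ∑ i, max (|∑ j, X i j * w j| - ρ) 0 ^ 2})
    (hub : ub = sSup {r : ℝ | ∃ (w : Fin d → ℝ) (η : Fin d → ℤ → ℝ),
        Real.sqrt (∑ i, w i ^ 2) ≤ 1 ∧ {i | w i ≠ 0}.ncard ≤ k ∧
        (∀ j, IsSOSII N (η j)) ∧
        (∀ j, ∑ ℓ ∈ Finset.Icc (-(N : ℤ)) (N : ℤ), η j ℓ = 1) ∧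
        (∀ j, (∑ i, v j i * w i) =
          ∑ ℓ ∈ Finset.Icc (-(N : ℤ)) (N : ℤ), ((ℓ : ℝ) / N) * η j ℓ) ∧
        r = (∑ j, lam j * ∑ ℓ ∈ Finset.Icc (-(N : ℤ)) (N : ℤ), ((ℓ : ℝ) / N) ^ 2 * η j ℓ)
            + (1 / n) * ∑ i,
                (max (|∑ j, X i j * w j| - ρ) 0 ^ 2 - (∑ j, X i j * w j) ^ 2)}) :
    opt ≤ ub ∧ ub ≤ opt + (1 / (4 * N ^ 2)) * ∑ j, lam j := by
  change opt = sSup (truncatedValues k ρ X) at hopt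
  change ub = sSup (relaxedValues k N ρ X v lam) at hub
  have hv : ∀ j, ∑ i, v j i ^ 2 = 1 := fun j => by simpa [sq] using horth j j
  have hbdd := truncatedValues_bddAbove hρ.le hv hnonneg hdecomp (k := k)
  have happrox := exists_truncatedValues_add_ge hd hk hnonneg hdecomp (N := N) (ρ := ρ)
  subst hopt hub
  constructor
  · refine csSup_le (truncatedValues_nonempty hd hk) fun r hr => ?_
    obtain ⟨r', hr', hle⟩ := exists_relaxedValues_ge hN hv hnonneg hdecomp r hr
    exact hle.trans (le_csSup (bddAbove_of_forall_exists_le_add hbdd happrox) hr')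
  · exact csSup_le_csSup_add_of_forall_exists_le_add (relaxedValues_nonempty hN) hbdd happrox

theorem stmt6 (n d k N : ℕ) (hn : 1 ≤ n) (hd : 1 ≤ d) (hk : 1 ≤ k) (hN : 1 ≤ N)
    (ρ : ℝ) (hρ : 0 < ρ)
    (X : Matrix (Fin n) (Fin d) ℝ) (v : Fin d → Fin d → ℝ) (lam : Fin d → ℝ)
    (horth : ∀ j j' : Fin d, (∑ i, v j i * v j' i) = if j = j' then 1 else 0)
    (hmono : ∀ j j' : Fin d, j ≤ j' → lam j' ≤ lam j)
    (hnonneg : ∀ j, 0 ≤ lam j)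
    (hdecomp : (1 / (n : ℝ)) • (Xᵀ * X) = ∑ j, lam j • Matrix.vecMulVec (v j) (v j))
    (opt ub : ℝ)
    (hopt : opt = sSup {r : ℝ | ∃ w : Fin d → ℝ,
        Real.sqrt (∑ i, w i ^ 2) = 1 ∧ {i | w i ≠ 0}.ncard ≤ k ∧
        r = (1 / n) * ∑ i, max (|∑ j, X i j * w j| - ρ) 0 ^ 2})
    (hub : ub = sSup {r : ℝ | ∃ (w : Fin d → ℝ) (η : Fin d → ℤ → ℝ),
        Real.sqrt (∑ i, w i ^ 2) ≤ 1 ∧ {i | w i ≠ 0}.ncard ≤ k ∧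
        (∀ j, IsSOSII N (η j)) ∧
        (∀ j, ∑ ℓ ∈ Finset.Icc (-(N : ℤ)) (N : ℤ), η j ℓ = 1) ∧
        (∀ j, (∑ i, v j i * w i) =
          ∑ ℓ ∈ Finset.Icc (-(N : ℤ)) (N : ℤ), ((ℓ : ℝ) / N) * η j ℓ) ∧
        r = (∑ j, lam j * ∑ ℓ ∈ Finset.Icc (-(N : ℤ)) (N : ℤ), ((ℓ : ℝ) / N) ^ 2 * η j ℓ)
            + (1 / n) * ∑ i,
                (max (|∑ j, X i j * w j| - ρ) 0 ^ 2 - (∑ j, X i j * w j) ^ 2)}) :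
    opt ≤ ub ∧ ub ≤ opt + (1 / (4 * N ^ 2)) * ∑ j, lam j :=
  stmt6_general n d k N hd hk hN ρ hρ X v lam horth hnonneg hdecomp opt ub hopt hub
end

section
/- Let d ≥ 1, 1 ≤ k ≤ d, ρ > 0, and let Σ be a symmetric positive definite d×d real matrix. For v ∈ ℝ^d define F(v) := ∫_ℝ (max(|t| − ρ, 0))² dμ_v(t), where μ_v is the Gaussian measure on ℝ with mean 0 and variance vᵀΣv. Then for every v̂ ∈ V_k: F(v̂) = sup_{v ∈ V_k} F(v) if and only if v̂ᵀΣv̂ = sup_{v ∈ V_k} vᵀΣv. In other words, the set of maximizers of F over V_k coincides with the set of maximizers of the quadratic form v ↦ vᵀΣv over V_k. -/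
/-!
Write `F(v) = G(vᵀΣv)` with `G(σ²) = 𝔼 ℓ_ρ(σZ)`, `Z` standard normal. Since `ℓ_ρ` is
nondecreasing in `|t|`, the integrand `ℓ_ρ(σZ)` is nondecreasing in `σ`, and it increases
strictly on the event `Z > max(0, ρ/σ)`, which has positive probability; hence `G` is strictly
increasing. So on `V_k`, where `vᵀΣv ≥ 0`, `F` is a strictly increasing function of the quadratic
form, and the two have the same maximizers, the maximum being attained because `V_k` is compact.
-/

open MeasureTheory ProbabilityTheory Set NNReal

lemma StrictMonoOn.apply_eq_sSup_image_iff {α β : Type*} [ConditionallyCompleteLinearOrder α]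
    [ConditionallyCompleteLattice β] {f : α → β} {s : Set α} (hf : StrictMonoOn f s)
    {m : α} (hm : IsGreatest s m) {x : α} (hx : x ∈ s) :
    f x = sSup (f '' s) ↔ x = sSup s := by
  rw [hm.csSup_eq, (hf.monotoneOn.map_isGreatest hm).csSup_eq]
  exact hf.injOn.eq_iff hx hm.1

lemma isClosed_setOf_ncard_support_le {ι M : Type*} [Finite ι] [TopologicalSpace M] [Zero M]
    [T1Space M] (k : ℕ) : IsClosed {v : ι → M | {i | v i ≠ 0}.ncard ≤ k} := by
  refine isOpen_compl_iff.1 (isOpen_iff_forall_mem_open.2 fun v hv => ?_)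
  refine ⟨⋂ i ∈ {i | v i ≠ 0}, {w | w i ≠ 0}, fun w hw => ?_, ?_, mem_iInter₂.2 fun i hi => hi⟩
  · have hvk : k < {i | v i ≠ 0}.ncard := not_le.1 hv
    exact not_le.2 (hvk.trans_le (ncard_le_ncard fun i hi => mem_iInter₂.1 hw i hi))
  · exact (toFinite {i | v i ≠ 0}).isOpen_biInter fun i _ =>
      isOpen_compl_singleton.preimage (continuous_apply (A := fun _ : ι => M) i)

lemma isCompact_setOf_sqrt_sum_sq_eq_one (ι : Type*) [Fintype ι] :
    IsCompact {v : ι → ℝ | √(∑ i, v i ^ 2) = 1} := by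
  refine (isCompact_univ_pi fun _ => isCompact_Icc (a := -1) (b := 1)).of_isClosed_subset
    (isClosed_eq (by fun_prop) continuous_const) fun v hv i _ => ?_
  have hsum : ∑ j, v j ^ 2 = 1 := Real.sqrt_eq_one.1 hv
  have hvi : v i ^ 2 ≤ 1 :=
    hsum ▸ Finset.single_le_sum (fun j _ => sq_nonneg (v j)) (Finset.mem_univ i)
  exact abs_le.1 (sq_le_one_iff_abs_le_one _ |>.1 hvi)

lemma Matrix.PosSemidef.sum_sum_mul_mul_nonneg {n : Type*} [Fintype n] {S : Matrix n n ℝ}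
    (hS : S.PosSemidef) (v : n → ℝ) : 0 ≤ ∑ i, ∑ j, v i * S i j * v j := by
  simpa only [star_trivial, dotProduct, Matrix.mulVec, Finset.mul_sum, mul_assoc]
    using hS.dotProduct_mulVec_nonneg v

/-- The loss `ℓ_ρ` of the statement. -/
noncomputable def softThresholdSq (ρ t : ℝ) : ℝ := max (|t| - ρ) 0 ^ 2

lemma continuous_softThresholdSq (ρ : ℝ) : Continuous (softThresholdSq ρ) := by
  unfold softThresholdSq; fun_prop

lemma softThresholdSq_le_of_abs_le (ρ : ℝ) {a b : ℝ} (h : |a| ≤ |b|) :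
    softThresholdSq ρ a ≤ softThresholdSq ρ b :=
  pow_le_pow_left₀ (le_max_right _ _) (max_le_max (by linarith) le_rfl) 2

lemma softThresholdSq_lt_of_lt {ρ a b : ℝ} (ha : 0 ≤ a) (hab : a < b) (hb : ρ < b) :
    softThresholdSq ρ a < softThresholdSq ρ b := by
  have hmax : max (|b| - ρ) 0 = b - ρ := by
    rw [abs_of_nonneg (ha.trans hab.le), max_eq_left (by linarith)]
  rw [softThresholdSq, softThresholdSq, hmax, abs_of_nonneg ha]
  exact pow_lt_pow_left₀ (max_lt (by linarith) (by linarith)) (le_max_right _ _) two_ne_zero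

lemma integrable_softThresholdSq_const_mul (ρ c : ℝ) :
    Integrable (fun t => softThresholdSq ρ (c * t)) (gaussianReal 0 1) := by
  have hdom : MemLp (fun t => |c * t| + |ρ|) 2 (gaussianReal 0 1) :=
    ((memLp_id_gaussianReal 2).const_mul c).abs.add (memLp_const _)
  refine (hdom.of_le (f := fun t => max (|c * t| - ρ) 0) (by fun_prop)
    (ae_of_all _ fun t => ?_)).integrable_sq
  rw [Real.norm_eq_abs, Real.norm_eq_abs, abs_of_nonneg (le_max_right _ _),
    abs_of_nonneg (by positivity : 0 ≤ |c * t| + |ρ|)]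
  exact max_le (by linarith [neg_abs_le ρ]) (by positivity)

lemma gaussianReal_map_sqrt_mul (v : ℝ≥0) :
    (gaussianReal 0 1).map (fun t => √v * t) = gaussianReal 0 v := by
  rw [gaussianReal_map_const_mul, mul_zero]
  congr
  ext
  simp

lemma integral_gaussianReal_eq_integral_sqrt_mul (v : ℝ≥0) {φ : ℝ → ℝ}
    (hφ : AEStronglyMeasurable φ (gaussianReal 0 v)) :
    ∫ t, φ t ∂gaussianReal 0 v = ∫ t, φ (√v * t) ∂gaussianReal 0 1 := by
  rw [← gaussianReal_map_sqrt_mul v] at hφ ⊢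
  exact integral_map (by fun_prop) hφ

theorem strictMono_integral_softThresholdSq_gaussianReal (ρ : ℝ) :
    StrictMono fun v : ℝ≥0 => ∫ t, softThresholdSq ρ t ∂gaussianReal 0 v := by
  intro v₁ v₂ hv
  simp only [integral_gaussianReal_eq_integral_sqrt_mul _
    (continuous_softThresholdSq ρ).aestronglyMeasurable]
  have hc₁ : 0 ≤ √(v₁ : ℝ) := Real.sqrt_nonneg _
  have hc : √(v₁ : ℝ) < √(v₂ : ℝ) := Real.sqrt_lt_sqrt v₁.coe_nonneg hv
  have hc₂ : 0 < √(v₂ : ℝ) := hc₁.trans_lt hc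
  have hi₁ := integrable_softThresholdSq_const_mul ρ √(v₁ : ℝ)
  have hi₂ := integrable_softThresholdSq_const_mul ρ √(v₂ : ℝ)
  rw [← sub_pos, ← integral_sub hi₂ hi₁]
  refine (integral_pos_iff_support_of_nonneg (fun t => sub_nonneg.2 ?_) (hi₂.sub hi₁)).2 ?_
  · refine softThresholdSq_le_of_abs_le ρ ?_
    rw [abs_mul, abs_mul, abs_of_nonneg hc₁, abs_of_pos hc₂]
    gcongr
  · have : (gaussianReal 0 1).IsOpenPosMeasure :=
      (gaussianReal_absolutelyContinuous' 0 one_ne_zero).isOpenPosMeasure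
    refine (isOpen_Ioi.measure_pos _ (nonempty_Ioi (a := max 0 (ρ / √(v₂ : ℝ))))).trans_le
      (measure_mono fun t ht => ?_)
    have ht₀ : 0 < t := (le_max_left _ _).trans_lt ht
    have htρ : ρ < √(v₂ : ℝ) * t := by
      rw [mul_comm, ← div_lt_iff₀ hc₂]
      exact (le_max_right _ _).trans_lt ht
    exact (sub_pos.2 (softThresholdSq_lt_of_lt (by positivity) (by gcongr) htρ)).ne'

theorem stmt9_general (d k : ℕ)
    (ρ : ℝ) (S : Matrix (Fin d) (Fin d) ℝ) (hS : S.PosDef)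
    (Vk : Set (Fin d → ℝ))
    (hVk : Vk = {v : Fin d → ℝ |
        Real.sqrt (∑ i, v i ^ 2) = 1 ∧ {i | v i ≠ 0}.ncard ≤ k})
    (F Q : (Fin d → ℝ) → ℝ)
    (hF : F = fun v => ∫ t, max (|t| - ρ) 0 ^ 2
        ∂(gaussianReal 0 (Real.toNNReal (∑ i, ∑ j, v i * S i j * v j))))
    (hQ : Q = fun v => ∑ i, ∑ j, v i * S i j * v j)
    (vhat : Fin d → ℝ) (hvhat : vhat ∈ Vk) :
    F vhat = sSup (F '' Vk) ↔ Q vhat = sSup (Q '' Vk) := by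
  set φ : ℝ → ℝ := fun q => ∫ t, softThresholdSq ρ t ∂gaussianReal 0 q.toNNReal
  have hFQ : F = φ ∘ Q := by subst hF hQ; rfl
  have hφ : StrictMonoOn φ (Ici 0) := fun a ha _ _ hab =>
    strictMono_integral_softThresholdSq_gaussianReal ρ
      ((Real.toNNReal_lt_toNNReal_iff_of_nonneg ha).2 hab)
  have hQ_nonneg : Q '' Vk ⊆ Ici 0 :=
    image_subset_iff.2 fun v _ => hQ ▸ hS.posSemidef.sum_sum_mul_mul_nonneg v
  have hVk_compact : IsCompact Vk :=
    hVk ▸ (isCompact_setOf_sqrt_sum_sq_eq_one _).inter_right (isClosed_setOf_ncard_support_le k)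
  have hQ_compact : IsCompact (Q '' Vk) := hVk_compact.image (hQ ▸ by fun_prop)
  rw [hFQ, image_comp]
  exact (hφ.mono hQ_nonneg).apply_eq_sSup_image_iff
    (hQ_compact.isGreatest_sSup ⟨_, mem_image_of_mem Q hvhat⟩) (mem_image_of_mem Q hvhat)

theorem stmt9 (d k : ℕ) (hd : 1 ≤ d) (hk1 : 1 ≤ k) (hkd : k ≤ d)
    (ρ : ℝ) (hρ : 0 < ρ) (S : Matrix (Fin d) (Fin d) ℝ) (hS : S.PosDef)
    (Vk : Set (Fin d → ℝ))
    (hVk : Vk = {v : Fin d → ℝ |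
        Real.sqrt (∑ i, v i ^ 2) = 1 ∧ {i | v i ≠ 0}.ncard ≤ k})
    (F Q : (Fin d → ℝ) → ℝ)
    (hF : F = fun v => ∫ t, max (|t| - ρ) 0 ^ 2
        ∂(gaussianReal 0 (Real.toNNReal (∑ i, ∑ j, v i * S i j * v j))))
    (hQ : Q = fun v => ∑ i, ∑ j, v i * S i j * v j)
    (vhat : Fin d → ℝ) (hvhat : vhat ∈ Vk) :
    F vhat = sSup (F '' Vk) ↔ Q vhat = sSup (Q '' Vk) :=
  stmt9_general d k ρ S hS Vk hVk F Q hF hQ vhat hvhat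
end

section
/- For all real ρ > 0 and σ > 0: ∫_{ρ}^{∞} x²·(x − ρ)²·exp(−x²/(2σ²)) dx > σ²·∫_{ρ}^{∞} (x − ρ)²·exp(−x²/(2σ²)) dx, where both integrals are (finite) Lebesgue integrals over the interval [ρ, ∞). -/
/-!
Gaussian integration by parts on `(ρ, ∞)`: with `φ x = exp (-x ^ 2 / (2 v))` one has `φ' = -(x / v) φ`,
so for a polynomial `p`,
`∫_ρ^∞ x p(x) φ = v p(ρ) φ(ρ) + v ∫_ρ^∞ p'(x) φ`.
For `p = X (X - ρ) ^ 2` the boundary term vanishes and `p' = (X - ρ) ^ 2 + 2 X (X - ρ)`, so the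
difference of the two sides of the inequality is `2 σ ^ 2 ∫_ρ^∞ x (x - ρ) φ`, which is positive.
-/

open MeasureTheory

open Real Filter Set Polynomial Topology

section GaussianTail

variable {v : ℝ}

lemma integrableOn_Ioi_pow_mul_exp_neg_sq_div (hv : 0 < v) (n : ℕ) (a : ℝ) :
    IntegrableOn (fun x => x ^ n * exp (-x ^ 2 / (2 * v))) (Ioi a) := by
  have h := integrable_rpow_mul_exp_neg_mul_sq (b := (2 * v)⁻¹) (by positivity)
    (s := n) (by linarith [n.cast_nonneg (α := ℝ)])
  refine h.integrableOn.congr_fun (fun x _ => ?_) measurableSet_Ioi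
  simp only [rpow_natCast]
  congr 2
  ring

lemma tendsto_pow_mul_exp_neg_sq_div_atTop (hv : 0 < v) (n : ℕ) :
    Tendsto (fun x => x ^ n * exp (-x ^ 2 / (2 * v))) atTop (𝓝 0) := by
  have h := (rpow_mul_exp_neg_mul_sq_isLittleO_exp_neg (b := (2 * v)⁻¹) (by positivity)
    n).tendsto_zero_of_tendsto (tendsto_exp_atBot.comp
      (tendsto_id.const_mul_atTop_of_neg (by norm_num)))
  refine h.congr fun x => ?_
  simp only [rpow_natCast]
  congr 2
  ring

lemma integrableOn_Ioi_eval_mul_exp_neg_sq_div (hv : 0 < v) (p : ℝ[X]) (a : ℝ) :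
    IntegrableOn (fun x => p.eval x * exp (-x ^ 2 / (2 * v))) (Ioi a) := by
  induction p using Polynomial.induction_on' with
  | add p q hp hq => simpa only [eval_add, add_mul, Pi.add_def] using hp.add hq
  | monomial n c =>
    simpa only [eval_monomial, mul_assoc, IntegrableOn] using
      (integrableOn_Ioi_pow_mul_exp_neg_sq_div hv n a).const_mul c

lemma tendsto_eval_mul_exp_neg_sq_div_atTop (hv : 0 < v) (p : ℝ[X]) :
    Tendsto (fun x => p.eval x * exp (-x ^ 2 / (2 * v))) atTop (𝓝 0) := by
  induction p using Polynomial.induction_on' with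
  | add p q hp hq => simpa only [eval_add, add_mul, add_zero] using hp.add hq
  | monomial n c =>
    simpa only [eval_monomial, mul_assoc, mul_zero] using
      (tendsto_pow_mul_exp_neg_sq_div_atTop hv n).const_mul c

theorem integral_Ioi_mul_eval_mul_exp_neg_sq_div (hv : 0 < v) (p : ℝ[X]) (a : ℝ) :
    ∫ x in Ioi a, x * p.eval x * exp (-x ^ 2 / (2 * v)) =
      v * p.eval a * exp (-a ^ 2 / (2 * v)) +
        v * ∫ x in Ioi a, p.derivative.eval x * exp (-x ^ 2 / (2 * v)) := by
  set φ := fun x : ℝ => exp (-x ^ 2 / (2 * v))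
  have hφ : ∀ x, HasDerivAt (fun y => -v * φ y) (x * φ x) x := fun x =>
    ((((hasDerivAt_pow 2 x).fun_neg.div_const (2 * v)).exp).const_mul (-v)).congr_deriv (by
      simp only [φ]
      field_simp
      ring)
  have hpx : (fun x => eval x p * (x * φ x)) = fun x => (X * p).eval x * φ x := by
    ext x
    simp only [eval_mul, eval_X]
    ring
  have hibp := integral_Ioi_mul_deriv_eq_deriv_mul (a := a) (a' := p.eval a * (-v * φ a))
    (b' := 0) (fun x _ => p.hasDerivAt x) (fun x _ => hφ x)
    (by simpa only [Pi.mul_def, hpx] using integrableOn_Ioi_eval_mul_exp_neg_sq_div hv (X * p) a)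
    (by simpa only [Pi.mul_def, mul_left_comm _ (-v), IntegrableOn] using
      (integrableOn_Ioi_eval_mul_exp_neg_sq_div hv p.derivative a).const_mul (-v))
    (((p.continuous.mul (continuous_const.mul (by fun_prop))).tendsto a).mono_left
      nhdsWithin_le_nhds)
    (by simpa only [Pi.mul_def, mul_left_comm _ (-v), mul_zero] using
      (tendsto_eval_mul_exp_neg_sq_div_atTop hv p).const_mul (-v))
  have hp'φ : (fun x => eval x p.derivative * (-v * φ x)) =
      fun x => -v * (eval x p.derivative * φ x) := by
    ext x
    ring
  rw [hp'φ, integral_const_mul] at hibp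
  have hxp : (fun x => x * eval x p * φ x) = fun x => eval x p * (x * φ x) := by
    ext x
    ring
  rw [hxp, hibp]
  ring

end GaussianTail

lemma setIntegral_Ioi_pos {f : ℝ → ℝ} {a : ℝ} (hf : ∀ x ∈ Ioi a, 0 < f x)
    (hfi : IntegrableOn f (Ioi a)) : 0 < ∫ x in Ioi a, f x := by
  rw [setIntegral_pos_iff_support_of_nonneg_ae
    (ae_restrict_of_forall_mem measurableSet_Ioi fun x hx => (hf x hx).le) hfi,
    inter_eq_right.2 fun x hx => Function.mem_support.2 (hf x hx).ne']
  simp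

theorem stmt11 (ρ σ : ℝ) (hρ : 0 < ρ) (hσ : 0 < σ) :
    σ ^ 2 * ∫ x in Set.Ici ρ, (x - ρ) ^ 2 * Real.exp (-x ^ 2 / (2 * σ ^ 2)) <
      ∫ x in Set.Ici ρ, x ^ 2 * (x - ρ) ^ 2 * Real.exp (-x ^ 2 / (2 * σ ^ 2)) := by
  have hv : 0 < σ ^ 2 := by positivity
  have hsq := integrableOn_Ioi_eval_mul_exp_neg_sq_div hv ((X - C ρ) ^ 2) ρ
  have hcross := integrableOn_Ioi_eval_mul_exp_neg_sq_div hv (X * (X - C ρ)) ρ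
  simp only [eval_mul, eval_X, eval_sub, eval_C, eval_pow] at hsq hcross
  have hcross_pos := setIntegral_Ioi_pos (fun x (hx : ρ < x) =>
    mul_pos (mul_pos (hρ.trans hx) (sub_pos.2 hx)) (exp_pos _)) hcross
  set p : ℝ[X] := X * (X - C ρ) ^ 2
  have hp : ∀ x, p.eval x = x * (x - ρ) ^ 2 := fun x => by simp [p]
  have hp' : ∀ x, p.derivative.eval x = (x - ρ) ^ 2 + 2 * (x * (x - ρ)) := fun x => by
    simp only [p, derivative_mul, derivative_X, derivative_sq, derivative_sub, derivative_C,
      sub_zero, eval_add, eval_mul, eval_pow, eval_sub, eval_X, eval_C, eval_one]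
    ring
  have hlhs : ∫ x in Ioi ρ, x * p.eval x * exp (-x ^ 2 / (2 * σ ^ 2)) =
      ∫ x in Ioi ρ, x ^ 2 * (x - ρ) ^ 2 * exp (-x ^ 2 / (2 * σ ^ 2)) := by
    congr 1 with x
    rw [hp]
    ring
  have hrhs : ∫ x in Ioi ρ, p.derivative.eval x * exp (-x ^ 2 / (2 * σ ^ 2)) =
      (∫ x in Ioi ρ, (x - ρ) ^ 2 * exp (-x ^ 2 / (2 * σ ^ 2))) +
        2 * ∫ x in Ioi ρ, x * (x - ρ) * exp (-x ^ 2 / (2 * σ ^ 2)) := by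
    rw [← integral_const_mul, ← integral_add hsq (hcross.const_mul 2)]
    congr 1 with x
    rw [hp']
    ring
  rw [integral_Ici_eq_integral_Ioi, integral_Ici_eq_integral_Ioi, ← hlhs,
    integral_Ioi_mul_eval_mul_exp_neg_sq_div hv, hrhs, hp, sub_self]
  linarith [mul_pos hv hcross_pos]
end

section
/- Let Σ be the 2×2 real matrix with entries Σ₁₁ = 5/8, Σ₁₂ = Σ₂₁ = √3/8, Σ₂₂ = 3/8 (so Σ = (1/2)(x₁x₁ᵀ + x₂x₂ᵀ) for x₁ = (1, 0) and x₂ = (1/2, √3/2)), and let u := (√3/2, 1/2). Then: (a) ‖u‖₂ = 1, Σu = (3/4)·u, and vᵀΣv ≤ 3/4 = uᵀΣu for every v ∈ ℝ² with ‖v‖₂ = 1, so u maximizes the quadratic form over unit vectors; (b) for every ρ with √3/2 < ρ < 1, defining G(v) := (1/2)·[(max(|⟨x₁, v⟩| − ρ, 0))² + (max(|⟨x₂, v⟩| − ρ, 0))²], one has G(u) = 0 < (1 − ρ)²/2 = G((1, 0)). Consequently, for such ρ, the maximizer u of v ↦ vᵀΣv over unit vectors is not a maximizer of G over unit vectors;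 the two problems have distinct optimal solutions. -/
theorem stmt12 (S : Matrix (Fin 2) (Fin 2) ℝ)
    (hS : S = !![5/8, Real.sqrt 3 / 8; Real.sqrt 3 / 8, 3/8])
    (x₁ x₂ u : Fin 2 → ℝ)
    (hx₁ : x₁ = ![1, 0]) (hx₂ : x₂ = ![1/2, Real.sqrt 3 / 2])
    (hu : u = ![Real.sqrt 3 / 2, 1/2])
    (G : ℝ → (Fin 2 → ℝ) → ℝ)
    (hG : G = fun ρ w => (1/2) * (max (|∑ i, x₁ i * w i| - ρ) 0 ^ 2
        + max (|∑ i, x₂ i * w i| - ρ) 0 ^ 2)) :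
    S = (1/2 : ℝ) • (Matrix.vecMulVec x₁ x₁ + Matrix.vecMulVec x₂ x₂) ∧
    Real.sqrt (∑ i, u i ^ 2) = 1 ∧
    S.mulVec u = (3/4 : ℝ) • u ∧
    (∀ w : Fin 2 → ℝ, Real.sqrt (∑ i, w i ^ 2) = 1 →
      ∑ i, ∑ j, w i * S i j * w j ≤ 3/4) ∧
    (∑ i, ∑ j, u i * S i j * u j) = 3/4 ∧
    ∀ ρ : ℝ, Real.sqrt 3 / 2 < ρ → ρ < 1 →
      G ρ u = 0 ∧ G ρ x₁ = (1 - ρ) ^ 2 / 2 ∧ G ρ u < G ρ x₁ := by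
  have hs0 : (0:ℝ) ≤ Real.sqrt 3 := Real.sqrt_nonneg 3
  have hs2 : Real.sqrt 3 ^ 2 = 3 := Real.sq_sqrt (by norm_num)
  have hs1 : (1:ℝ) < Real.sqrt 3 := by nlinarith
  subst hS hx₁ hx₂ hu hG
  refine ⟨?_, ?_, ?_, ?_, ?_, ?_⟩
  · ext i j
    fin_cases i <;> fin_cases j <;>
      simp [Matrix.vecMulVec_apply] <;> nlinarith
  · have h : (∑ i, (![Real.sqrt 3 / 2, 1/2] : Fin 2 → ℝ) i ^ 2) = 1 := by
      rw [Fin.sum_univ_two]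
      simp only [Matrix.cons_val_zero, Matrix.cons_val_one, Matrix.head_cons]
      nlinarith
    rw [h, Real.sqrt_one]
  · ext i
    fin_cases i <;>
      simp [Matrix.mulVec, dotProduct, Fin.sum_univ_two] <;> nlinarith
  · intro w hw
    have hnn : (0:ℝ) ≤ w 0 ^ 2 + w 1 ^ 2 := by positivity
    have hw2 : w 0 ^ 2 + w 1 ^ 2 = 1 := by
      rw [Fin.sum_univ_two] at hw
      nlinarith [Real.sq_sqrt hnn]
    simp only [Fin.sum_univ_two, Matrix.cons_val', Matrix.cons_val_zero,
      Matrix.cons_val_one, Matrix.head_cons, Matrix.empty_val',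
      Matrix.cons_val_fin_one, Matrix.head_fin_const, Matrix.of_apply]
    nlinarith [sq_nonneg (w 0 - Real.sqrt 3 * w 1)]
  · simp only [Fin.sum_univ_two, Matrix.cons_val', Matrix.cons_val_zero,
      Matrix.cons_val_one, Matrix.head_cons, Matrix.empty_val',
      Matrix.cons_val_fin_one, Matrix.head_fin_const, Matrix.of_apply]
    nlinarith
  · intro ρ h1 h2
    have e1 : |∑ i, (![1,0] : Fin 2 → ℝ) i * (![Real.sqrt 3 / 2, 1/2] : Fin 2 → ℝ) i| = Real.sqrt 3 / 2 := by
      rw [Fin.sum_univ_two]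
      simp only [Matrix.cons_val_zero, Matrix.cons_val_one, Matrix.head_cons]
      rw [abs_of_nonneg (by positivity)]; ring
    have e2 : |∑ i, (![1/2, Real.sqrt 3 / 2] : Fin 2 → ℝ) i * (![Real.sqrt 3 / 2, 1/2] : Fin 2 → ℝ) i| = Real.sqrt 3 / 2 := by
      rw [Fin.sum_univ_two]
      simp only [Matrix.cons_val_zero, Matrix.cons_val_one, Matrix.head_cons]
      rw [abs_of_nonneg (by positivity)]; ring
    have e3 : |∑ i, (![1,0] : Fin 2 → ℝ) i * (![1,0] : Fin 2 → ℝ) i| = 1 := by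
      rw [Fin.sum_univ_two]
      simp only [Matrix.cons_val_zero, Matrix.cons_val_one, Matrix.head_cons]
      norm_num
    have e4 : |∑ i, (![1/2, Real.sqrt 3 / 2] : Fin 2 → ℝ) i * (![1,0] : Fin 2 → ℝ) i| = 1/2 := by
      rw [Fin.sum_univ_two]
      simp only [Matrix.cons_val_zero, Matrix.cons_val_one, Matrix.head_cons]
      norm_num
    have hρ2 : (1:ℝ)/2 < ρ := by nlinarith
    have Gu : (1:ℝ)/2 * (max (Real.sqrt 3 / 2 - ρ) 0 ^ 2 + max (Real.sqrt 3 / 2 - ρ) 0 ^ 2) = 0 := by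
      rw [max_eq_right (by linarith)]; ring
    have Gx : (1:ℝ)/2 * (max (1 - ρ) 0 ^ 2 + max ((1:ℝ)/2 - ρ) 0 ^ 2) = (1 - ρ)^2/2 := by
      rw [max_eq_right (by linarith : (1:ℝ)/2 - ρ ≤ 0), max_eq_left (by linarith : (0:ℝ) ≤ 1 - ρ)]
      ring
    refine ⟨?_, ?_, ?_⟩
    · simp only [e1, e2]; exact Gu
    · simp only [e3, e4]; exact Gx
    · simp only [e1, e2, e3, e4, Gu, Gx]
      have h3 : 0 < (1 - ρ)^2 := by nlinarith
      linarith
end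

section
/- Let d ≥ 1, n ≥ 1, 1 ≤ k ≤ d, λ > 0, ρ ≥ 0, and let v* ∈ ℝ^d satisfy ‖v*‖₂ = 1 and ‖v*‖₀ = k (exactly k nonzero entries). Define f(v) := √(1 + λ·⟨v, v*⟩²) − (ρ/√n)·‖v‖₁ for v ∈ ℝ^d. If v̂ ∈ V_k satisfies f(v) ≤ f(v̂) for all v ∈ V_k, then the support of v̂ is contained in the support of v*; that is, every index i with v̂_i ≠ 0 satisfies v*_i ≠ 0. (For the spiked covariance Σ = λ v* v*ᵀ + I_d, one has √(vᵀΣv) = √(1 + λ⟨v, v*⟩²) for unit v, so f is the population feature-wise robust sparse PCA objective.) -/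
private lemma sum_split' {d : ℕ} (i j : Fin d) (hij : j ≠ i) (g : Fin d → ℝ) :
    ∑ l, g l = g i + g j + ∑ l ∈ (Finset.univ.erase i).erase j, g l := by
  rw [← Finset.add_sum_erase _ g (Finset.mem_univ i),
      ← Finset.add_sum_erase _ g (Finset.mem_erase.mpr ⟨hij, Finset.mem_univ j⟩), add_assoc]

set_option maxHeartbeats 1000000 in
theorem stmt14 (d n k : ℕ) (hd : 1 ≤ d) (hn : 1 ≤ n) (hk1 : 1 ≤ k) (hkd : k ≤ d)
    (lam ρ : ℝ) (hlam : 0 < lam) (hρ : 0 ≤ ρ)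
    (vstar : Fin d → ℝ) (hvs2 : Real.sqrt (∑ i, vstar i ^ 2) = 1)
    (hvs0 : {i | vstar i ≠ 0}.ncard = k)
    (f : (Fin d → ℝ) → ℝ)
    (hf : f = fun v => Real.sqrt (1 + lam * (∑ i, v i * vstar i) ^ 2)
        - (ρ / Real.sqrt n) * ∑ i, |v i|)
    (vhat : Fin d → ℝ)
    (hhat2 : Real.sqrt (∑ i, vhat i ^ 2) = 1) (hhat0 : {i | vhat i ≠ 0}.ncard ≤ k)
    (hmax : ∀ v : Fin d → ℝ, Real.sqrt (∑ i, v i ^ 2) = 1 →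
      {i | v i ≠ 0}.ncard ≤ k → f v ≤ f vhat) :
    ∀ i, vhat i ≠ 0 → vstar i ≠ 0 := by
  subst hf
  have hvs2' : ∑ l, vstar l ^ 2 = 1 := Real.sqrt_eq_one.mp hvs2
  have hhat2' : ∑ l, vhat l ^ 2 = 1 := Real.sqrt_eq_one.mp hhat2
  intro i hvi
  by_contra hsi
  set c : ℝ := ∑ l, vhat l * vstar l with hc
  clear_value c
  rcases hρ.lt_or_eq with hρpos | hρ0
  · -- ρ > 0 : swap argument
    have hk0 : {l | vstar l ≠ 0}.ncard ≠ 0 := by omega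
    obtain ⟨j, hj⟩ : {l | vstar l ≠ 0}.Nonempty := Set.nonempty_of_ncard_ne_zero hk0
    simp only [Set.mem_setOf_eq] at hj
    have hij : j ≠ i := by rintro rfl; exact hj hsi
    have hvia : i ∈ {l | vhat l ≠ 0} := hvi
    set a := vhat i with ha
    clear_value a
    set b := vhat j with hb
    clear_value b
    set r := Real.sqrt (b ^ 2 + a ^ 2) with hr
    have hr0 : 0 ≤ r := Real.sqrt_nonneg _
    have hr2 : r ^ 2 = b ^ 2 + a ^ 2 := Real.sq_sqrt (by positivity)
    have hbr : |b| ≤ r := by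
      rw [← Real.sqrt_sq_eq_abs]; exact Real.sqrt_le_sqrt (le_add_of_nonneg_right (sq_nonneg a))
    clear_value r
    set B : ℝ := c - b * vstar j with hB
    clear_value B
    set s : ℝ := if 0 ≤ B * vstar j then 1 else -1 with hs
    clear_value s
    have hs1 : s = 1 ∨ s = -1 := by rw [hs]; split <;> simp
    have hsabs : s * (B * vstar j) = |B * vstar j| := by
      rw [hs]; split
      · rw [one_mul, abs_of_nonneg ‹_›]
      · rw [abs_of_neg (lt_of_not_ge ‹_›)]; ring
    set w : Fin d → ℝ := fun l => if l = i then 0 else if l = j then s * r else vhat l with hw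
    clear_value w
    have hwi : w i = 0 := by simp [hw]
    have hwj : w j = s * r := by simp [hw, hij]
    have hwl : ∀ l ∈ (Finset.univ.erase i).erase j, w l = vhat l := by
      intro l hl
      rw [Finset.mem_erase, Finset.mem_erase] at hl
      simp [hw, hl.1, hl.2.1]
    have hsr2 : (s * r) ^ 2 = r ^ 2 := by rcases hs1 with h | h <;> rw [h] <;> ring
    -- sum of squares
    have hw2 : ∑ l, w l ^ 2 = 1 := by
      rw [sum_split' i j hij, hwi, hwj, hsr2,
        Finset.sum_congr rfl (fun l hl => by rw [hwl l hl])]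
      rw [sum_split' i j hij (fun l => vhat l ^ 2)] at hhat2'
      rw [← ha, ← hb] at hhat2'
      linarith [hhat2']
    -- sparsity
    have hsupp : {l | w l ≠ 0} ⊆ insert j ({l | vhat l ≠ 0} \ {i}) := by
      intro l hl
      simp only [Set.mem_setOf_eq] at hl
      by_cases h1 : l = j
      · exact h1 ▸ Set.mem_insert _ _
      · by_cases h2 : l = i
        · exact absurd (h2 ▸ hwi) hl
        · refine Set.mem_insert_of_mem _ ⟨?_, by simpa using h2⟩
          simpa [hw, h1, h2] using hl
    have hnc : {l | w l ≠ 0}.ncard ≤ k := by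
      have h1 : {l | w l ≠ 0}.ncard ≤ (insert j ({l | vhat l ≠ 0} \ {i})).ncard :=
        Set.ncard_le_ncard hsupp (Set.toFinite _)
      have h2 := Set.ncard_insert_le j ({l | vhat l ≠ 0} \ {i})
      have h3 : ({l | vhat l ≠ 0} \ {i}).ncard = {l | vhat l ≠ 0}.ncard - 1 :=
        Set.ncard_diff_singleton_of_mem hvia
      have h4 : 0 < {l | vhat l ≠ 0}.ncard :=
        (Set.ncard_pos (Set.toFinite _)).mpr ⟨i, hvia⟩
      omega
    -- inner products
    set cw : ℝ := ∑ l, w l * vstar l with hcw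
    clear_value cw
    have hrest := sum_split' i j hij (fun l => vhat l * vstar l)
    rw [← hc, ← ha, ← hb] at hrest
    have hcwval : cw = s * r * vstar j + B := by
      rw [hcw, sum_split' i j hij, hwi, hwj,
        Finset.sum_congr rfl (fun l hl => by rw [hwl l hl]), hB, hrest, hsi]
      ring
    have hcval : c = b * vstar j + B := by rw [hB]; ring
    have habs0 : 0 ≤ |B * vstar j| := abs_nonneg _
    have hbB : b * (vstar j * B) ≤ r * |B * vstar j| := by
      calc b * (vstar j * B) ≤ |b * (vstar j * B)| := le_abs_self _
        _ = |b| * |B * vstar j| := by rw [abs_mul, abs_mul, abs_mul]; ring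
        _ ≤ r * |B * vstar j| := mul_le_mul_of_nonneg_right hbr habs0
    have hb2r2 : b ^ 2 ≤ r ^ 2 := by rw [hr2]; exact le_add_of_nonneg_right (sq_nonneg a)
    have ecw : cw ^ 2 = r ^ 2 * vstar j ^ 2 + 2 * r * |B * vstar j| + B ^ 2 := by
      rw [hcwval, ← hsabs]
      rcases hs1 with h | h <;> rw [h] <;> ring
    have ec : c ^ 2 = b ^ 2 * vstar j ^ 2 + 2 * (b * (vstar j * B)) + B ^ 2 := by
      rw [hcval]; ring
    have hcwge : c ^ 2 ≤ cw ^ 2 := by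
      have h5 : b ^ 2 * vstar j ^ 2 ≤ r ^ 2 * vstar j ^ 2 :=
        mul_le_mul_of_nonneg_right hb2r2 (sq_nonneg _)
      have h6 : 2 * (b * (vstar j * B)) ≤ 2 * r * |B * vstar j| := by linarith [hbB]
      rw [ecw, ec]; linarith
    -- ℓ1 norm
    have hl1 : ∑ l, |w l| = (∑ l, |vhat l|) - |a| - |b| + r := by
      rw [sum_split' i j hij, hwi, hwj,
        Finset.sum_congr rfl (fun l hl => by rw [hwl l hl]),
        sum_split' i j hij (fun l => |vhat l|)]
      have hsrabs : |s * r| = r := by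
        rw [abs_mul, abs_of_nonneg hr0]
        rcases hs1 with h | h <;> simp [h]
      rw [hsrabs, abs_zero, ← ha, ← hb]; ring
    -- strict improvement
    have hρn : 0 < ρ / Real.sqrt n := by
      apply div_pos hρpos
      apply Real.sqrt_pos.mpr
      exact_mod_cast Nat.lt_of_lt_of_le Nat.zero_lt_one hn
    have hlt : Real.sqrt (1 + lam * c ^ 2) - (ρ / Real.sqrt n) * ∑ l, |vhat l|
        < Real.sqrt (1 + lam * cw ^ 2) - (ρ / Real.sqrt n) * ∑ l, |w l| := by
      have hsqrtle : Real.sqrt (1 + lam * c ^ 2) ≤ Real.sqrt (1 + lam * cw ^ 2) := by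
        apply Real.sqrt_le_sqrt
        have := mul_le_mul_of_nonneg_left hcwge hlam.le
        linarith
      by_cases hb0 : b = 0
      · -- ℓ1 equal, inner strictly bigger
        have hreq : r = |a| := by rw [hr, hb0]; simpa using Real.sqrt_sq_eq_abs a
        have hl1' : ∑ l, |w l| = ∑ l, |vhat l| := by rw [hl1, hreq, hb0]; simp
        have hrpos : 0 < r := by rw [hreq]; exact abs_pos.mpr hvi
        have hcwgt : c ^ 2 < cw ^ 2 := by
          have hvj2 : 0 < vstar j ^ 2 := by positivity
          rw [ecw, ec, hb0]
          have h7 : 0 < r ^ 2 * vstar j ^ 2 := by positivity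
          have h8 : 0 ≤ 2 * r * |B * vstar j| := by positivity
          have h9 : ((0:ℝ)) ^ 2 * vstar j ^ 2 + 2 * (0 * (vstar j * B)) + B ^ 2 = B ^ 2 := by ring
          rw [h9]; linarith
        have : Real.sqrt (1 + lam * c ^ 2) < Real.sqrt (1 + lam * cw ^ 2) := by
          apply Real.sqrt_lt_sqrt (by positivity)
          have := mul_lt_mul_of_pos_left hcwgt hlam
          linarith
        rw [hl1']; linarith
      · -- ℓ1 strictly smaller
        have hrlt : r < |a| + |b| := by
          rw [hr, ← Real.sqrt_sq (by positivity : (0:ℝ) ≤ |a| + |b|)]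
          apply Real.sqrt_lt_sqrt (by positivity)
          have h10 : 0 < |a| * |b| := mul_pos (abs_pos.mpr hvi) (abs_pos.mpr hb0)
          have h11 : (|a| + |b|) ^ 2 = |a| ^ 2 + 2 * (|a| * |b|) + |b| ^ 2 := by ring
          rw [h11]; linarith [sq_abs a, sq_abs b]
        have : (ρ / Real.sqrt n) * ∑ l, |w l| < (ρ / Real.sqrt n) * ∑ l, |vhat l| := by
          apply mul_lt_mul_of_pos_left _ hρn
          rw [hl1]; linarith
        linarith
    have hcontra := hmax w (by rw [hw2]; exact Real.sqrt_one) hnc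
    simp only [← hc, ← hcw] at hcontra
    linarith
  · -- ρ = 0 : Cauchy-Schwarz equality argument
    subst hρ0
    have hfeas := hmax vstar hvs2 (le_of_eq hvs0)
    simp only [zero_div, zero_mul, sub_zero] at hfeas
    have hvv : ∑ l, vstar l * vstar l = 1 := by
      rw [← hvs2']; exact Finset.sum_congr rfl (fun l _ => by ring)
    rw [hvv, ← hc] at hfeas
    have hc2 : 1 ≤ c ^ 2 := by
      have hA : (0:ℝ) ≤ 1 + lam * 1 ^ 2 := by positivity
      have hB' : (0:ℝ) ≤ 1 + lam * c ^ 2 := by positivity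
      have h1 : (Real.sqrt (1 + lam * 1 ^ 2)) ^ 2 ≤ (Real.sqrt (1 + lam * c ^ 2)) ^ 2 :=
        pow_le_pow_left₀ (Real.sqrt_nonneg _) hfeas 2
      rw [Real.sq_sqrt hA, Real.sq_sqrt hB'] at h1
      have h2 := le_of_mul_le_mul_left (by linarith : lam * 1 ≤ lam * c ^ 2) hlam
      linarith
    have hexp : ∑ l, (vhat l - c * vstar l) ^ 2 = 1 - c ^ 2 := by
      have hpt : ∀ l ∈ Finset.univ, (vhat l - c * vstar l) ^ 2
          = vhat l ^ 2 - 2 * c * (vhat l * vstar l) + c ^ 2 * vstar l ^ 2 := by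
        intro l _; ring
      rw [Finset.sum_congr rfl hpt, Finset.sum_add_distrib,
        Finset.sum_sub_distrib, ← Finset.mul_sum, ← Finset.mul_sum, hhat2', hvs2', ← hc]
      ring
    have hzero : ∑ l, (vhat l - c * vstar l) ^ 2 = 0 := by
      have hnn : 0 ≤ ∑ l, (vhat l - c * vstar l) ^ 2 :=
        Finset.sum_nonneg (fun l _ => sq_nonneg _)
      linarith
    have hterm := (Finset.sum_eq_zero_iff_of_nonneg (fun l _ => sq_nonneg _)).mp hzero i
      (Finset.mem_univ i)
    have heq : vhat i = c * vstar i := by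
      have := pow_eq_zero_iff (n := 2) (by norm_num) |>.mp hterm
      linarith [this]
    rw [hsi, mul_zero] at heq
    exact hvi heq
end

section
/- Let d ≥ 1, n ≥ 1, 1 ≤ k ≤ d, λ > 0, δ ∈ (0, 1), and let v* ∈ ℝ^d satisfy ‖v*‖₂ = 1 and ‖v*‖₀ = k (exactly k nonzero entries). Define f(v) := √(1 + λ·⟨v, v*⟩²) − (ρ/√n)·‖v‖₁. Suppose 0 < ρ ≤ λ·(2δ − δ²)·√n / (2·√k·(√(1+λ) + √(1 + λ(1−δ)²))). Then every v̂ ∈ V_k satisfying f(v) ≤ f(v̂) for all v ∈ V_k (i.e., every maximizer of f over V_k) satisfies |⟨v̂, v*⟩| ≥ 1 − δ. (This makes explicit the constant in the condition ρ ≤ c·δ·λ·√(n/k); note that for the spiked covariance Σ = λ v* v*ᵀ + I_d, v* is the maximizer of vᵀΣv over V_k.) -/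
theorem stmt15 (d n k : ℕ) (hd : 1 ≤ d) (hn : 1 ≤ n) (hk1 : 1 ≤ k) (hkd : k ≤ d)
    (lam ρ δ : ℝ) (hlam : 0 < lam) (hδ0 : 0 < δ) (hδ1 : δ < 1)
    (vstar : Fin d → ℝ) (hvs2 : Real.sqrt (∑ i, vstar i ^ 2) = 1)
    (hvs0 : {i | vstar i ≠ 0}.ncard = k)
    (f : (Fin d → ℝ) → ℝ)
    (hf : f = fun v => Real.sqrt (1 + lam * (∑ i, v i * vstar i) ^ 2)
        - (ρ / Real.sqrt n) * ∑ i, |v i|)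
    (hρ0 : 0 < ρ)
    (hρ : ρ ≤ lam * (2 * δ - δ ^ 2) * Real.sqrt n /
        (2 * Real.sqrt k * (Real.sqrt (1 + lam) + Real.sqrt (1 + lam * (1 - δ) ^ 2))))
    (vhat : Fin d → ℝ)
    (hhat2 : Real.sqrt (∑ i, vhat i ^ 2) = 1) (hhat0 : {i | vhat i ≠ 0}.ncard ≤ k)
    (hmax : ∀ v : Fin d → ℝ, Real.sqrt (∑ i, v i ^ 2) = 1 →
      {i | v i ≠ 0}.ncard ≤ k → f v ≤ f vhat) :
    1 - δ ≤ |∑ i, vhat i * vstar i| := by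
  by_contra hcon
  push_neg at hcon
  set A := ∑ i, vhat i * vstar i with hA
  have hk0 : (0:ℝ) < Real.sqrt k := Real.sqrt_pos.mpr (by exact_mod_cast hk1)
  have hn0 : (0:ℝ) < Real.sqrt n := Real.sqrt_pos.mpr (by exact_mod_cast hn)
  set a := Real.sqrt (1 + lam) with ha
  set b := Real.sqrt (1 + lam * (1 - δ) ^ 2) with hb
  have ha0 : 0 < a := Real.sqrt_pos.mpr (by linarith)
  have hb0 : 0 < b := Real.sqrt_pos.mpr (by nlinarith [sq_nonneg (1 - δ)])
  have ha2 : a ^ 2 = 1 + lam := Real.sq_sqrt (by linarith)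
  have hb2 : b ^ 2 = 1 + lam * (1 - δ) ^ 2 :=
    Real.sq_sqrt (by nlinarith [sq_nonneg (1 - δ)])
  have hS0 : 0 < a + b := by linarith
  have hD0 : 0 < lam * (2 * δ - δ ^ 2) := by
    have h2 : 0 < δ * (2 - δ) := mul_pos hδ0 (by linarith)
    nlinarith
  have hvs2' : ∑ i, vstar i ^ 2 = 1 := by
    have h := Real.sq_sqrt (show (0:ℝ) ≤ ∑ i, vstar i ^ 2 from
      Finset.sum_nonneg fun i _ => sq_nonneg (vstar i))
    rw [hvs2] at h; nlinarith
  -- ℓ1 norm of vstar ≤ √k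
  have hl1 : ∑ i, |vstar i| ≤ Real.sqrt k := by
    set s := Finset.univ.filter (fun i => vstar i ≠ 0) with hs
    have hcard : (s.card : ℝ) = k := by
      have heq : {i | vstar i ≠ 0} = ↑s := by ext i; simp [hs]
      rw [heq, Set.ncard_coe_finset] at hvs0
      exact_mod_cast hvs0
    have hsum_eq : ∑ i, |vstar i| = ∑ i ∈ s, |vstar i| := by
      rw [hs, Finset.sum_filter_of_ne]
      intro i _ h h0
      exact h (by simpa using h0)
    have hcs : (∑ i ∈ s, 1 * |vstar i|) ^ 2 ≤
        (∑ i ∈ s, (1:ℝ) ^ 2) * ∑ i ∈ s, |vstar i| ^ 2 :=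
      Finset.sum_mul_sq_le_sq_mul_sq s _ _
    have hsq : ∑ i ∈ s, |vstar i| ^ 2 ≤ 1 := by
      calc ∑ i ∈ s, |vstar i| ^ 2 = ∑ i ∈ s, vstar i ^ 2 :=
            Finset.sum_congr rfl fun i _ => sq_abs _
        _ ≤ ∑ i, vstar i ^ 2 :=
            Finset.sum_le_sum_of_subset_of_nonneg (Finset.subset_univ s)
              (fun i _ _ => sq_nonneg _)
        _ = 1 := hvs2'
    have h1 : (∑ i ∈ s, |vstar i|) ^ 2 ≤ (k : ℝ) := by
      simp only [one_mul, one_pow, Finset.sum_const, nsmul_eq_mul, mul_one] at hcs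
      calc (∑ i ∈ s, |vstar i|) ^ 2 ≤ (s.card : ℝ) * ∑ i ∈ s, |vstar i| ^ 2 := hcs
        _ ≤ (s.card : ℝ) * 1 := mul_le_mul_of_nonneg_left hsq (Nat.cast_nonneg _)
        _ = (k : ℝ) := by rw [mul_one, hcard]
    have hnn : 0 ≤ ∑ i ∈ s, |vstar i| := Finset.sum_nonneg fun i _ => abs_nonneg _
    rw [hsum_eq]
    exact (Real.le_sqrt hnn (Nat.cast_nonneg k)).mpr h1
  have hfk : f vstar ≤ f vhat := hmax vstar hvs2 (le_of_eq hvs0)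
  have hself : ∑ i, vstar i * vstar i = 1 := by
    rw [← hvs2']; exact Finset.sum_congr rfl fun i _ => (pow_two _).symm
  have hρn0 : 0 < ρ / Real.sqrt n := div_pos hρ0 hn0
  have hfvs : a - (ρ / Real.sqrt n) * Real.sqrt k ≤ f vstar := by
    rw [hf]
    simp only
    rw [hself]
    norm_num
    rw [← ha]
    have : (ρ / Real.sqrt n) * ∑ i, |vstar i| ≤ (ρ / Real.sqrt n) * Real.sqrt k :=
      mul_le_mul_of_nonneg_left hl1 (le_of_lt hρn0)
    linarith
  clear_value A a b
  have hAub : A ^ 2 ≤ (1 - δ) ^ 2 := by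
    rw [← sq_abs A]
    exact pow_le_pow_left₀ (abs_nonneg _) hcon.le 2
  have hfvh : f vhat ≤ b := by
    rw [hf]
    simp only [← hA]
    have h1 : Real.sqrt (1 + lam * A ^ 2) ≤ b := by
      rw [hb]
      apply Real.sqrt_le_sqrt
      have := mul_le_mul_of_nonneg_left hAub hlam.le
      linarith
    have h2 : 0 ≤ (ρ / Real.sqrt n) * ∑ i, |vhat i| :=
      mul_nonneg (le_of_lt hρn0) (Finset.sum_nonneg fun i _ => abs_nonneg _)
    linarith
  -- combine: a - b ≤ ρ √k / √n
  have hkey : a - b ≤ ρ * Real.sqrt k / Real.sqrt n := by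
    have h1 : a - (ρ / Real.sqrt n) * Real.sqrt k ≤ b := le_trans hfvs (le_trans hfk hfvh)
    have h2 : (ρ / Real.sqrt n) * Real.sqrt k = ρ * Real.sqrt k / Real.sqrt n := by ring
    linarith
  have hab : (a - b) * (a + b) = lam * (2 * δ - δ ^ 2) := by
    linear_combination ha2 - hb2
  have hρ2 : ρ * Real.sqrt k / Real.sqrt n ≤
      lam * (2 * δ - δ ^ 2) / (2 * (a + b)) := by
    rw [div_le_div_iff₀ hn0 (by positivity)]
    rw [le_div_iff₀ (by positivity)] at hρ
    have h3 : ρ * Real.sqrt k * (2 * (a + b)) = ρ * (2 * Real.sqrt k * (a + b)) := by ring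
    linarith [hρ, h3]
  have hfinal : a - b ≤ lam * (2 * δ - δ ^ 2) / (2 * (a + b)) := le_trans hkey hρ2
  rw [le_div_iff₀ (by positivity)] at hfinal
  have h5 : (a - b) * (2 * (a + b)) = 2 * ((a - b) * (a + b)) := by ring
  linarith [hab, hD0, h5]
end

section
/- Let λ > 0, let c ∈ (1/2, 1), and let θ ∈ [0, π/2]. Then √(1 + λ·(√c·cos θ + √(1−c)·sin θ)²) − √(1 + λ·c·cos²θ) ≤ sin θ · λ·√((1−c)·(1+3c)) / (√(1 + λ(1−c)) + 1). (This is the key estimate showing that when ρ·√(k₂/n) exceeds the right-hand-side bound, the robust objective value with both signal parts active never exceeds the value with only the strong signal part active.) -/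
lemma stmt16_aux (u v s t c w : ℝ) (hu2 : u ^ 2 = c) (hv2 : v ^ 2 = 1 - c)
    (hst : s ^ 2 + t ^ 2 = 1) (hw2 : w ^ 2 = (1 - c) * (1 + 3 * c)) :
    (2 * u * v * t + v ^ 2 * s) ^ 2 ≤ w ^ 2 := by
  have key : (2 * u * v * t + v ^ 2 * s) ^ 2 + (2 * u * v * s - v ^ 2 * t) ^ 2 = w ^ 2 := by
    linear_combination (4 * u ^ 2 * v ^ 2 + v ^ 4) * hst - hw2 + 4 * v ^ 2 * hu2
      + (v ^ 2 + 1 + 3 * c) * hv2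
  nlinarith [sq_nonneg (2 * u * v * s - v ^ 2 * t)]

theorem stmt16 (lam c θ : ℝ) (hlam : 0 < lam) (hc1 : 1/2 < c) (hc2 : c < 1)
    (hθ0 : 0 ≤ θ) (hθ1 : θ ≤ Real.pi / 2) :
    Real.sqrt (1 + lam * (Real.sqrt c * Real.cos θ + Real.sqrt (1 - c) * Real.sin θ) ^ 2)
        - Real.sqrt (1 + lam * c * Real.cos θ ^ 2) ≤
      Real.sin θ * (lam * Real.sqrt ((1 - c) * (1 + 3 * c)) /
        (Real.sqrt (1 + lam * (1 - c)) + 1)) := by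
  have hpi := Real.pi_pos
  set s := Real.sin θ with hs_def
  set t := Real.cos θ with ht_def
  have hs : 0 ≤ s := Real.sin_nonneg_of_nonneg_of_le_pi hθ0 (by linarith)
  have ht : 0 ≤ t := Real.cos_nonneg_of_mem_Icc ⟨by linarith, hθ1⟩
  have hst : s ^ 2 + t ^ 2 = 1 := by
    rw [hs_def, ht_def]; exact Real.sin_sq_add_cos_sq θ
  have hc0 : (0:ℝ) ≤ c := by linarith
  have hc0' : (0:ℝ) ≤ 1 - c := by linarith
  set u := Real.sqrt c with hu_def
  set v := Real.sqrt (1 - c) with hv_def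
  have hu2 : u ^ 2 = c := Real.sq_sqrt hc0
  have hv2 : v ^ 2 = 1 - c := Real.sq_sqrt hc0'
  have hu0 : 0 ≤ u := Real.sqrt_nonneg _
  have hv0 : 0 ≤ v := Real.sqrt_nonneg _
  have huv : v ≤ u := Real.sqrt_le_sqrt (by linarith)
  have hts : 1 - s ≤ t := by nlinarith [sq_nonneg (t + s - 1), sq_nonneg (t - s)]
  have ha : v ≤ u * t + v * s := by nlinarith [mul_nonneg hv0 ht]
  set A := 1 + lam * (u * t + v * s) ^ 2 with hA_def
  set B := 1 + lam * c * t ^ 2 with hB_def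
  set D := 1 + lam * (1 - c) with hD_def
  set w := Real.sqrt ((1 - c) * (1 + 3 * c)) with hw_def
  have hw2 : w ^ 2 = (1 - c) * (1 + 3 * c) := Real.sq_sqrt (by nlinarith)
  have hw0 : 0 ≤ w := Real.sqrt_nonneg _
  have hA0 : 0 ≤ A := by
    have := mul_nonneg hlam.le (sq_nonneg (u * t + v * s))
    simp only [hA_def]; linarith
  have hB0 : 0 ≤ B := by
    have := mul_nonneg (mul_nonneg hlam.le hc0) (sq_nonneg t)
    simp only [hB_def]; linarith
  have hAD : D ≤ A := by
    have hsq : v ^ 2 ≤ (u * t + v * s) ^ 2 := pow_le_pow_left₀ hv0 ha 2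
    have := mul_le_mul_of_nonneg_left hsq hlam.le
    rw [hv2] at this
    simp only [hA_def, hD_def]
    linarith
  have hB1 : (1:ℝ) ≤ B := by
    have := mul_nonneg (mul_nonneg hlam.le hc0) (sq_nonneg t)
    simp only [hB_def]; linarith
  have hdiff : A - B = lam * s * (2 * u * v * t + v ^ 2 * s) := by
    rw [hA_def, hB_def, ← hu2]; ring
  have hABnn : B ≤ A := by
    have hkey : 0 ≤ lam * s * (2 * u * v * t + v ^ 2 * s) := by positivity
    linarith [hdiff]
  set SA := Real.sqrt A with hSA_def
  set SB := Real.sqrt B with hSB_def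
  set SD := Real.sqrt D with hSD_def
  have hSA2 : SA ^ 2 = A := Real.sq_sqrt hA0
  have hSB2 : SB ^ 2 = B := Real.sq_sqrt hB0
  have hSDle : SD ≤ SA := Real.sqrt_le_sqrt hAD
  have hSB1 : (1:ℝ) ≤ SB := by
    rw [hSB_def, show (1:ℝ) = Real.sqrt 1 from (Real.sqrt_one).symm]
    exact Real.sqrt_le_sqrt hB1
  have hSD0 : 0 ≤ SD := Real.sqrt_nonneg _
  have hsum_pos : 0 < SD + 1 := by linarith
  have hSAB : 0 ≤ SA - SB := sub_nonneg.2 (Real.sqrt_le_sqrt hABnn)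
  have hCS : 2 * u * v * t + v ^ 2 * s ≤ w := by
    have h1 : 0 ≤ 2 * u * v * t + v ^ 2 * s := by positivity
    have h2 : (2 * u * v * t + v ^ 2 * s) ^ 2 ≤ w ^ 2 :=
      stmt16_aux u v s t c w hu2 hv2 hst hw2
    have := Real.sqrt_le_sqrt h2
    rwa [Real.sqrt_sq h1, Real.sqrt_sq hw0] at this
  have h1 : SA - SB ≤ (A - B) / (SD + 1) := by
    rw [le_div_iff₀ hsum_pos]
    have hprod : (SA - SB) * (SA + SB) = A - B := by
      rw [← hSA2, ← hSB2]; ring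
    calc (SA - SB) * (SD + 1) ≤ (SA - SB) * (SA + SB) := by
          apply mul_le_mul_of_nonneg_left (by linarith) hSAB
      _ = A - B := hprod
  have hnum : A - B ≤ lam * s * w := by
    rw [hdiff]
    exact mul_le_mul_of_nonneg_left hCS (mul_nonneg hlam.le hs)
  have h2 : (A - B) / (SD + 1) ≤ (lam * s * w) / (SD + 1) := by
    gcongr
  calc SA - SB ≤ (A - B) / (SD + 1) := h1
    _ ≤ (lam * s * w) / (SD + 1) := h2
    _ = s * (lam * w / (SD + 1)) := by ring
end
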